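/- arXiv:2605.00926 — 7 statements merged into one kernel-verified Lean document; each statement's English description precedes it below -/
import Mathlib

section
/- If t_1 < t_2 < ... < t_n are real numbers such that the set of points {(F_f(t), T_f(t)) : t ∈ ℝ} equals {(F_f(t_k), T_f(t_k)) : k = 1,...,n}, then the trapezoidal area A = Σ_{k=1}^{n-1} (T_f(t_k) + T_f(t_{k+1}))/2 · (F_f(t_k) − F_f(t_{k+1})) equals the Lebesgue–Stieltjes integral ∫ T_f^b d(−F_f), where T_f^b(x) = (lim_{s↓x} T_f(s) + lim_{s↑x} T_f(s))/2 is the balanced version of T_f. -/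
open MeasureTheory Set

/-- The uniform probability of a subset of a finite type. -/
noncomputable def unifP {Ω : Type*} [Fintype Ω] (E : Set Ω) : ℝ :=
  E.ncard / Fintype.card Ω

/-- The true positive rate `T_f(t) = μ(f⁻¹[t,1] ∩ P)/μ(P)`. -/
noncomputable def Tf {Ω : Type*} [Fintype Ω] (f : Ω → ℝ) (P : Set Ω) (t : ℝ) : ℝ :=
  unifP (f ⁻¹' Set.Icc t 1 ∩ P) / unifP P

/-- The false positive rate `F_f(t) = μ(f⁻¹[t,1] ∩ Pᶜ)/μ(Pᶜ)`. -/
noncomputable def Ff {Ω : Type*} [Fintype Ω] (f : Ω → ℝ) (P : Set Ω) (t : ℝ) : ℝ :=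
  unifP (f ⁻¹' Set.Icc t 1 ∩ Pᶜ) / unifP Pᶜ

lemma negFf_mono {Ω : Type*} [Fintype Ω] (f : Ω → ℝ) (P : Set Ω) :
    Monotone (fun t => -(Ff f P t)) := by
  intro s t hst
  simp only [neg_le_neg_iff]
  unfold Ff unifP
  have hsub : f ⁻¹' Set.Icc t 1 ∩ Pᶜ ⊆ f ⁻¹' Set.Icc s 1 ∩ Pᶜ := fun x hx =>
    ⟨⟨hst.trans hx.1.1, hx.1.2⟩, hx.2⟩
  have h1 : ((f ⁻¹' Set.Icc t 1 ∩ Pᶜ).ncard : ℝ) ≤ (f ⁻¹' Set.Icc s 1 ∩ Pᶜ).ncard := by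
    exact_mod_cast Set.ncard_le_ncard hsub (Set.toFinite _)
  gcongr

/-- The Lebesgue–Stieltjes measure `d(−F_f)` of the nondecreasing function `−F_f`. -/
noncomputable def dnegF {Ω : Type*} [Fintype Ω] (f : Ω → ℝ) (P : Set Ω) : Measure ℝ :=
  (negFf_mono f P).stieltjesFunction.measure

/-- The balanced version `T_f^b` of `T_f`: average of right and left limits. -/
noncomputable def Tfb {Ω : Type*} [Fintype Ω] (f : Ω → ℝ) (P : Set Ω) (t : ℝ) : ℝ :=
  (Function.rightLim (Tf f P) t + Function.leftLim (Tf f P) t) / 2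


open Filter Function in
lemma leftLim_of_const {g : ℝ → ℝ} {a x c : ℝ} (hax : a < x) (h : ∀ s, a < s → s < x → g s = c) :
    Function.leftLim g x = c := by
  apply leftLim_eq_of_tendsto (α := ℝ) (β := ℝ)
  apply Tendsto.congr' (f₁ := fun _ => c) _ tendsto_const_nhds
  filter_upwards [Ioo_mem_nhdsLT_of_mem (Set.mem_Ioc.2 ⟨hax, le_refl x⟩)] with s hs
  exact (h s hs.1 hs.2).symm

open Filter Function in
lemma rightLim_of_const {g : ℝ → ℝ} {x b c : ℝ} (hxb : x < b) (h : ∀ s, x < s → s < b → g s = c) :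
    Function.rightLim g x = c := by
  apply rightLim_eq_of_tendsto (α := ℝ) (β := ℝ)
  apply Tendsto.congr' (f₁ := fun _ => c) _ tendsto_const_nhds
  filter_upwards [Ioo_mem_nhdsGT_of_mem (Set.mem_Ico.2 ⟨le_refl x, hxb⟩)] with s hs
  exact (h s hs.1 hs.2).symm

section unif
variable {Ω : Type*} [Fintype Ω]
lemma unifP_nonneg (E : Set Ω) : 0 ≤ unifP E := by unfold unifP; positivity
lemma unifP_pos [Nonempty Ω] {E : Set Ω} (hE : E.Nonempty) : 0 < unifP E := by
  unfold unifP
  apply div_pos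
  · exact_mod_cast (Set.ncard_pos (Set.toFinite E)).2 hE
  · exact_mod_cast Fintype.card_pos
lemma unifP_mono {E F : Set Ω} (h : E ⊆ F) : unifP E ≤ unifP F := by
  unfold unifP
  have : (E.ncard : ℝ) ≤ F.ncard := by
    exact_mod_cast Set.ncard_le_ncard h (Set.toFinite _)
  gcongr
end unif

section gaps
variable {Ω : Type*} [Fintype Ω] (f : Ω → ℝ)

omit [Fintype Ω] in
lemma preim_congr {a b : ℝ} (hab : a ≤ b) (h : ∀ ω, f ω ∉ Set.Ico a b) :
    f ⁻¹' Set.Icc a 1 = f ⁻¹' Set.Icc b 1 := by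
  ext ω
  simp only [Set.mem_preimage, Set.mem_Icc]
  constructor
  · rintro ⟨h1, h2⟩
    refine ⟨?_, h2⟩
    by_contra hb
    exact h ω ⟨h1, not_le.1 hb⟩
  · rintro ⟨h1, h2⟩
    exact ⟨hab.trans h1, h2⟩

lemma exists_left_gap (x : ℝ) : ∃ ε > (0:ℝ), ∀ ω, f ω ∉ Set.Ioo (x - ε) x := by
  classical
  set S := (Finset.univ.image f).filter (· < x) with hS
  by_cases h : S.Nonempty
  · refine ⟨x - S.max' h, by
      have := (Finset.mem_filter.1 (S.max'_mem h)).2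
      simp only [gt_iff_lt, sub_pos]; exact this, ?_⟩
    intro ω hω
    have h1 : f ω ∈ S := Finset.mem_filter.2 ⟨Finset.mem_image_of_mem f (Finset.mem_univ ω), hω.2⟩
    have := S.le_max' _ h1
    have h2 := hω.1
    simp only [sub_sub_cancel] at h2
    linarith
  · refine ⟨1, one_pos, fun ω hω => h ⟨f ω, Finset.mem_filter.2
      ⟨Finset.mem_image_of_mem f (Finset.mem_univ ω), hω.2⟩⟩⟩

lemma exists_right_gap (x : ℝ) : ∃ ε > (0:ℝ), ∀ ω, f ω ∉ Set.Ioo x (x + ε) := by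
  classical
  set S := (Finset.univ.image f).filter (x < ·) with hS
  by_cases h : S.Nonempty
  · refine ⟨S.min' h - x, by
      have := (Finset.mem_filter.1 (S.min'_mem h)).2
      simp only [gt_iff_lt, sub_pos]; exact this, ?_⟩
    intro ω hω
    have h1 : f ω ∈ S := Finset.mem_filter.2 ⟨Finset.mem_image_of_mem f (Finset.mem_univ ω), hω.1⟩
    have := S.min'_le _ h1
    have h2 := hω.2
    rw [add_sub_cancel] at h2
    linarith
  · refine ⟨1, one_pos, fun ω hω => h ⟨f ω, Finset.mem_filter.2
      ⟨Finset.mem_image_of_mem f (Finset.mem_univ ω), hω.1⟩⟩⟩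

variable (P : Set Ω)

lemma left_const (x : ℝ) : ∃ ε > (0:ℝ), ∀ s, x - ε < s → s ≤ x →
    Ff f P s = Ff f P x ∧ Tf f P s = Tf f P x := by
  obtain ⟨ε, hε, hgap⟩ := exists_left_gap f x
  refine ⟨ε, hε, fun s h1 h2 => ?_⟩
  have hpre : f ⁻¹' Set.Icc s 1 = f ⁻¹' Set.Icc x 1 := by
    apply preim_congr f h2
    intro ω hω
    exact hgap ω ⟨lt_of_lt_of_le h1 hω.1, hω.2⟩
  constructor <;> simp only [Ff, Tf, hpre]

lemma right_const_pair (x : ℝ) : ∃ ε > (0:ℝ), ∀ s1 s2, x < s1 → s1 ≤ s2 → s2 < x + ε →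
    Ff f P s1 = Ff f P s2 ∧ Tf f P s1 = Tf f P s2 := by
  obtain ⟨ε, hε, hgap⟩ := exists_right_gap f x
  refine ⟨ε, hε, fun s1 s2 h1 h12 h2 => ?_⟩
  have hpre : f ⁻¹' Set.Icc s1 1 = f ⁻¹' Set.Icc s2 1 := by
    apply preim_congr f h12
    intro ω hω
    exact hgap ω ⟨lt_of_lt_of_le h1 hω.1, hω.2.trans h2⟩
  constructor <;> simp only [Ff, Tf, hpre]

end gaps

section basic
variable {Ω : Type*} [Fintype Ω] (f : Ω → ℝ) (P : Set Ω)

lemma Ff_anti : Antitone (Ff f P) := fun a b hab => by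
  unfold Ff
  have h := unifP_mono (Ω := Ω) (show f ⁻¹' Set.Icc b 1 ∩ Pᶜ ⊆ f ⁻¹' Set.Icc a 1 ∩ Pᶜ from
    fun x hx => ⟨⟨hab.trans hx.1.1, hx.1.2⟩, hx.2⟩)
  have h0 := unifP_nonneg (Ω := Ω) Pᶜ
  rcases eq_or_lt_of_le h0 with h0 | h0
  · rw [← h0]; simp
  · gcongr

lemma Tf_anti : Antitone (Tf f P) := fun a b hab => by
  unfold Tf
  have h := unifP_mono (Ω := Ω) (show f ⁻¹' Set.Icc b 1 ∩ P ⊆ f ⁻¹' Set.Icc a 1 ∩ P from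
    fun x hx => ⟨⟨hab.trans hx.1.1, hx.1.2⟩, hx.2⟩)
  have h0 := unifP_nonneg (Ω := Ω) P
  rcases eq_or_lt_of_le h0 with h0 | h0
  · rw [← h0]; simp
  · gcongr

lemma Ff_nonneg (s : ℝ) : 0 ≤ Ff f P s :=
  div_nonneg (unifP_nonneg _) (unifP_nonneg _)

lemma Tf_nonneg (s : ℝ) : 0 ≤ Tf f P s :=
  div_nonneg (unifP_nonneg _) (unifP_nonneg _)

lemma Ff_le_one [Nonempty Ω] (hPc : Pᶜ.Nonempty) (s : ℝ) : Ff f P s ≤ 1 := by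
  unfold Ff
  rw [div_le_one (unifP_pos hPc)]
  exact unifP_mono Set.inter_subset_right

lemma Tf_le_one [Nonempty Ω] (hP : P.Nonempty) (s : ℝ) : Tf f P s ≤ 1 := by
  unfold Tf
  rw [div_le_one (unifP_pos hP)]
  exact unifP_mono Set.inter_subset_right

lemma Ff_nonpos [Nonempty Ω] (hf : ∀ ω, f ω ∈ Set.Icc (0:ℝ) 1) (hPc : Pᶜ.Nonempty)
    {s : ℝ} (hs : s ≤ 0) : Ff f P s = 1 := by
  unfold Ff
  have : f ⁻¹' Set.Icc s 1 = Set.univ := by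
    ext ω; simpa using ⟨hs.trans (hf ω).1, (hf ω).2⟩
  rw [this, Set.univ_inter, div_self (unifP_pos hPc).ne']

lemma Tf_nonpos [Nonempty Ω] (hf : ∀ ω, f ω ∈ Set.Icc (0:ℝ) 1) (hP : P.Nonempty)
    {s : ℝ} (hs : s ≤ 0) : Tf f P s = 1 := by
  unfold Tf
  have : f ⁻¹' Set.Icc s 1 = Set.univ := by
    ext ω; simpa using ⟨hs.trans (hf ω).1, (hf ω).2⟩
  rw [this, Set.univ_inter, div_self (unifP_pos hP).ne']

lemma Ff_gt_one {s : ℝ} (hs : 1 < s) : Ff f P s = 0 := by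
  unfold Ff
  rw [Set.Icc_eq_empty (not_le.2 hs)]
  simp [unifP]

lemma Tf_gt_one {s : ℝ} (hs : 1 < s) : Tf f P s = 0 := by
  unfold Tf
  rw [Set.Icc_eq_empty (not_le.2 hs)]
  simp [unifP]

lemma leftLim_Ff (x : ℝ) : Function.leftLim (Ff f P) x = Ff f P x := by
  obtain ⟨ε, hε, hc⟩ := left_const f P x
  exact leftLim_of_const (by linarith) (fun s h1 h2 => (hc s h1 h2.le).1)

lemma leftLim_Tf (x : ℝ) : Function.leftLim (Tf f P) x = Tf f P x := by
  obtain ⟨ε, hε, hc⟩ := left_const f P x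
  exact leftLim_of_const (by linarith) (fun s h1 h2 => (hc s h1 h2.le).2)

/-- Near to the right of `x`, `Ff` and `Tf` agree with their right limits at `x`. -/
lemma right_const (x : ℝ) : ∃ ε > (0:ℝ), ∀ s, x < s → s < x + ε →
    Ff f P s = Function.rightLim (Ff f P) x ∧ Tf f P s = Function.rightLim (Tf f P) x := by
  obtain ⟨ε, hε, hc⟩ := right_const_pair f P x
  have hm : x < x + ε / 2 := by linarith
  have hF : Function.rightLim (Ff f P) x = Ff f P (x + ε / 2) := by
    apply rightLim_of_const (show x < x + ε/2 by linarith)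
    intro s h1 h2
    rcases le_total s (x + ε/2) with h | h
    · exact (hc s (x + ε/2) h1 h (by linarith)).1
    · exact ((hc (x + ε/2) s hm h (by linarith)).1).symm
  have hT : Function.rightLim (Tf f P) x = Tf f P (x + ε / 2) := by
    apply rightLim_of_const (show x < x + ε/2 by linarith)
    intro s h1 h2
    rcases le_total s (x + ε/2) with h | h
    · exact (hc s (x + ε/2) h1 h (by linarith)).2
    · exact ((hc (x + ε/2) s hm h (by linarith)).2).symm
  refine ⟨ε / 2, by linarith, fun s h1 h2 => ?_⟩
  rw [hF, hT]
  rcases le_total s (x + ε/2) with h | h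
  · exact hc s (x + ε/2) h1 h (by linarith)
  · obtain ⟨a, b⟩ := hc (x + ε/2) s hm h (by linarith)
    exact ⟨a.symm, b.symm⟩

end basic


section meas
variable {Ω : Type*} [Fintype Ω] (f : Ω → ℝ) (P : Set Ω)

lemma dnegF_singleton (a : ℝ) :
    dnegF f P {a} = ENNReal.ofReal (Ff f P a - Function.rightLim (Ff f P) a) := by
  unfold dnegF
  rw [StieltjesFunction.measure_singleton]
  have hGa : (negFf_mono f P).stieltjesFunction a = -(Function.rightLim (Ff f P) a) := by
    rw [Monotone.stieltjesFunction_eq]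
    obtain ⟨ε, hε, hc⟩ := right_const f P a
    exact rightLim_of_const (show a < a + ε by linarith)
      (fun s h1 h2 => by rw [(hc s h1 h2).1])
  have hGl : Function.leftLim (⇑((negFf_mono f P).stieltjesFunction)) a = -(Ff f P a) := by
    obtain ⟨ε, hε, hc⟩ := left_const f P a
    apply leftLim_of_const (show a - ε < a by linarith)
    intro s h1 h2
    rw [Monotone.stieltjesFunction_eq]
    apply rightLim_of_const h2
    intro u hu1 hu2
    have := (hc u (by linarith) hu2.le).1
    simp only [this]
  rw [hGa, hGl]
  congr 1
  ring

lemma dnegF_univ [Nonempty Ω] (hf : ∀ ω, f ω ∈ Set.Icc (0:ℝ) 1) (hPc : Pᶜ.Nonempty) :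
    dnegF f P Set.univ = ENNReal.ofReal 1 := by
  unfold dnegF
  rw [StieltjesFunction.measure_univ (l := -1) (u := 0)]
  · norm_num
  · apply Filter.Tendsto.congr' _ (tendsto_const_nhds (x := (-1:ℝ)))
    filter_upwards [Filter.eventually_le_atBot (-1 : ℝ)] with x hx
    have hx0 : x < 0 := by linarith
    rw [Monotone.stieltjesFunction_eq]
    symm
    apply rightLim_of_const hx0
    intro s h1 h2
    rw [Ff_nonpos f P hf hPc h2.le]
  · apply Filter.Tendsto.congr' _ (tendsto_const_nhds (x := (0:ℝ)))
    filter_upwards [Filter.eventually_ge_atTop (2 : ℝ)] with x hx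
    rw [Monotone.stieltjesFunction_eq]
    symm
    apply rightLim_of_const (show x < x + 1 by linarith)
    intro s h1 h2
    rw [Ff_gt_one f P (show (1:ℝ) < s by linarith)]
    simp

end meas

theorem trapezoid_area_eq_stieltjes_integral {Ω : Type*} [Fintype Ω] [Nonempty Ω] (f : Ω → ℝ) (P : Set Ω)
    (hf : ∀ ω, f ω ∈ Set.Icc (0:ℝ) 1) (hP : P.Nonempty) (hPc : Pᶜ.Nonempty)
    (n : ℕ) (t : ℕ → ℝ) (hmono : ∀ i j, i < j → j < n → t i < t j)
    (hrange : (Set.range fun s => (Ff f P s, Tf f P s))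
        = (fun k => (Ff f P (t k), Tf f P (t k))) '' Set.Iio n) :
    (∑ k ∈ Finset.range (n - 1),
        (Tf f P (t k) + Tf f P (t (k + 1))) / 2 * (Ff f P (t k) - Ff f P (t (k + 1))))
      = ∫ x, Tfb f P x ∂(dnegF f P) := by
  classical
  have hFanti := Ff_anti f P
  have hTanti := Tf_anti f P
  -- every point of the curve is attained at some `t j`
  have hpt : ∀ s : ℝ, ∃ j, j < n ∧ Ff f P s = Ff f P (t j) ∧ Tf f P s = Tf f P (t j) := by
    intro s
    have hmem : (Ff f P s, Tf f P s) ∈ Set.range fun s => (Ff f P s, Tf f P s) := ⟨s, rfl⟩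
    rw [hrange] at hmem
    obtain ⟨j, hj, hje⟩ := hmem
    rw [Prod.ext_iff] at hje
    exact ⟨j, hj, hje.1.symm, hje.2.symm⟩
  have hn : 0 < n := by
    obtain ⟨j, hj, -⟩ := hpt 0
    omega
  have hmono' : ∀ i j, i ≤ j → j < n → t i ≤ t j := by
    intro i j hij hj
    rcases eq_or_lt_of_le hij with rfl | h
    · exact le_refl _
    · exact (hmono i j h hj).le
  -- between consecutive `t`'s the curve takes only the endpoint values
  have hL : ∀ k s, k + 1 < n → t k < s → s ≤ t (k + 1) →
      (Ff f P s = Ff f P (t k) ∧ Tf f P s = Tf f P (t k)) ∨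
      (Ff f P s = Ff f P (t (k + 1)) ∧ Tf f P s = Tf f P (t (k + 1))) := by
    intro k s hk hks hsk
    obtain ⟨j, hj, hFj, hTj⟩ := hpt s
    rcases le_or_gt j k with hjk | hjk
    · left
      have h1 : t j ≤ t k := hmono' j k hjk (by omega)
      have e2 : Ff f P (t k) ≤ Ff f P (t j) := hFanti h1
      have e3 : Ff f P s ≤ Ff f P (t k) := hFanti hks.le
      have e2' : Tf f P (t k) ≤ Tf f P (t j) := hTanti h1
      have e3' : Tf f P s ≤ Tf f P (t k) := hTanti hks.le
      constructor <;> linarith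
    · right
      have h1 : t (k + 1) ≤ t j := hmono' (k + 1) j hjk hj
      have e2 : Ff f P (t j) ≤ Ff f P (t (k + 1)) := hFanti h1
      have e3 : Ff f P (t (k + 1)) ≤ Ff f P s := hFanti hsk
      have e2' : Tf f P (t j) ≤ Tf f P (t (k + 1)) := hTanti h1
      have e3' : Tf f P (t (k + 1)) ≤ Tf f P s := hTanti hsk
      constructor <;> linarith
  -- boundary values
  have hlastF : Ff f P (t (n - 1)) = 0 := by
    obtain ⟨j, hj, hFj, -⟩ := hpt (max (t (n - 1)) 1 + 1)
    have h1 : Ff f P (max (t (n - 1)) 1 + 1) = 0 :=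
      Ff_gt_one f P (by have := le_max_right (t (n - 1)) 1; linarith)
    have h3 : Ff f P (t (n - 1)) ≤ Ff f P (t j) := hFanti (hmono' j (n - 1) (by omega) (by omega))
    have h4 := Ff_nonneg f P (t (n - 1))
    linarith
  have hfirstF : Ff f P (t 0) = 1 := by
    obtain ⟨j, hj, hFj, -⟩ := hpt (min (t 0) 0)
    have h1 : Ff f P (min (t 0) 0) = 1 := Ff_nonpos f P hf hPc (min_le_right _ _)
    have h2 : Ff f P (t 0) ≤ 1 := Ff_le_one f P hPc _
    have h3 : Ff f P (t j) ≤ Ff f P (t 0) := hFanti (hmono' 0 j (Nat.zero_le j) hj)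
    linarith
  -- jump locations
  set A : ℕ → Set ℝ := fun k => insert (t k)
    {s | (t k < s ∧ s ≤ t (k + 1)) ∧ Ff f P s = Ff f P (t k) ∧ Tf f P s = Tf f P (t k)} with hA
  set c : ℕ → ℝ := fun k => sSup (A k) with hc
  have hAprops : ∀ k, k + 1 < n → Ff f P (t k) ≠ Ff f P (t (k + 1)) →
      (t k ≤ c k ∧ c k < t (k + 1)) ∧
      dnegF f P {c k} = ENNReal.ofReal (Ff f P (t k) - Ff f P (t (k + 1))) ∧
      Tfb f P (c k) = (Tf f P (t k) + Tf f P (t (k + 1))) / 2 := by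
    intro k hk hne
    have htt : t k < t (k + 1) := hmono k (k + 1) (lt_add_one k) hk
    have hAne : (A k).Nonempty := ⟨t k, Set.mem_insert _ _⟩
    have hub : ∀ s ∈ A k, s ≤ t (k + 1) := by
      rintro s (rfl | hs)
      · exact htt.le
      · exact hs.1.2
    have hAbdd : BddAbove (A k) := ⟨t (k + 1), hub⟩
    have hck1 : t k ≤ c k := le_csSup hAbdd (Set.mem_insert _ _)
    have hck2 : c k ≤ t (k + 1) := csSup_le hAne hub
    have hkey1 : ∀ s, t k < s → s < c k →
        Ff f P s = Ff f P (t k) ∧ Tf f P s = Tf f P (t k) := by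
      intro s h1 h2
      obtain ⟨a, ha, hsa⟩ := exists_lt_of_lt_csSup hAne h2
      rcases ha with rfl | ha
      · exact absurd hsa (by linarith)
      · have e1 : Ff f P s ≤ Ff f P (t k) := hFanti h1.le
        have e2 : Ff f P a ≤ Ff f P s := hFanti hsa.le
        have e1' : Tf f P s ≤ Tf f P (t k) := hTanti h1.le
        have e2' : Tf f P a ≤ Tf f P s := hTanti hsa.le
        have := ha.2.1
        have := ha.2.2
        constructor <;> linarith
    have hkey2 : c k < t (k + 1) := by
      rcases eq_or_lt_of_le hck2 with he | h
      · exfalso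
        apply hne
        have h2 : Function.leftLim (Ff f P) (t (k + 1)) = Ff f P (t k) :=
          leftLim_of_const htt (fun s hs1 hs2 => (hkey1 s hs1 (by rw [he]; exact hs2)).1)
        rw [← leftLim_Ff f P (t (k + 1)), h2]
      · exact h
    have hkey3 : ∀ s, c k < s → s ≤ t (k + 1) →
        Ff f P s = Ff f P (t (k + 1)) ∧ Tf f P s = Tf f P (t (k + 1)) := by
      intro s h1 h2
      have hts : t k < s := lt_of_le_of_lt hck1 h1
      rcases hL k s hk hts h2 with h | h
      · exfalso
        have hmem : s ∈ A k := Set.mem_insert_of_mem _ ⟨⟨hts, h2⟩, h⟩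
        exact absurd (le_csSup hAbdd hmem) (not_le.2 h1)
      · exact h
    have hkey4 : Ff f P (c k) = Ff f P (t k) ∧ Tf f P (c k) = Tf f P (t k) := by
      rcases eq_or_lt_of_le hck1 with he | h
      · rw [← he]
        exact ⟨rfl, rfl⟩
      · constructor
        · rw [← leftLim_Ff f P (c k)]
          exact leftLim_of_const h (fun s hs1 hs2 => (hkey1 s hs1 hs2).1)
        · rw [← leftLim_Tf f P (c k)]
          exact leftLim_of_const h (fun s hs1 hs2 => (hkey1 s hs1 hs2).2)
    have hrlimF : Function.rightLim (Ff f P) (c k) = Ff f P (t (k + 1)) :=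
      rightLim_of_const hkey2 (fun s hs1 hs2 => (hkey3 s hs1 hs2.le).1)
    have hrlimT : Function.rightLim (Tf f P) (c k) = Tf f P (t (k + 1)) :=
      rightLim_of_const hkey2 (fun s hs1 hs2 => (hkey3 s hs1 hs2.le).2)
    refine ⟨⟨hck1, hkey2⟩, ?_, ?_⟩
    · rw [dnegF_singleton, hkey4.1, hrlimF]
    · unfold Tfb
      rw [hrlimT, leftLim_Tf, hkey4.2]
      ring
  -- the index set of actual jumps
  set K := (Finset.range (n - 1)).filter (fun k => Ff f P (t k) ≠ Ff f P (t (k + 1))) with hK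
  have hKmem : ∀ k ∈ K, k + 1 < n ∧ Ff f P (t k) ≠ Ff f P (t (k + 1)) := by
    intro k hk
    obtain ⟨h1, h2⟩ := Finset.mem_filter.1 hk
    exact ⟨by have := Finset.mem_range.1 h1; omega, h2⟩
  have hcmono : ∀ a ∈ K, ∀ b ∈ K, a < b → c a < c b := by
    intro a ha b hb hab
    obtain ⟨ha1, ha2⟩ := hKmem a ha
    obtain ⟨hb1, hb2⟩ := hKmem b hb
    calc c a < t (a + 1) := ((hAprops a ha1 ha2).1).2
    _ ≤ t b := hmono' (a + 1) b hab (by omega)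
    _ ≤ c b := ((hAprops b hb1 hb2).1).1
  have hinj : ∀ a ∈ K, ∀ b ∈ K, c a = c b → a = b := by
    intro a ha b hb hab
    rcases lt_trichotomy a b with h | h | h
    · exact absurd hab (ne_of_lt (hcmono a ha b hb h))
    · exact h
    · exact absurd hab.symm (ne_of_lt (hcmono b hb a ha h))
  set C := K.image c with hCdef
  have hnonneg : ∀ k ∈ Finset.range (n - 1), 0 ≤ Ff f P (t k) - Ff f P (t (k + 1)) := by
    intro k hk
    have hk' : k + 1 < n := by have := Finset.mem_range.1 hk; omega
    have := hFanti (hmono k (k + 1) (lt_add_one k) hk').le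
    linarith
  have htele : ∑ k ∈ Finset.range (n - 1), (Ff f P (t k) - Ff f P (t (k + 1))) = 1 := by
    rw [Finset.sum_range_sub' (f := fun i => Ff f P (t i))]
    rw [hfirstF, hlastF]
    ring
  have hKsum : ∑ k ∈ K, (Ff f P (t k) - Ff f P (t (k + 1))) = 1 := by
    rw [hK, Finset.sum_filter_of_ne, htele]
    intro k hk hne
    exact fun he => hne (by rw [he]; ring)
  have hCmeas : dnegF f P ↑C = ENNReal.ofReal 1 := by
    have h1 : (↑C : Set ℝ) = ⋃ x ∈ C, {x} := by ext x; simp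
    rw [h1, measure_biUnion_finset ?_ (fun b _ => measurableSet_singleton b)]
    · rw [Finset.sum_image hinj]
      have h2 : ∀ k ∈ K, dnegF f P {c k}
          = ENNReal.ofReal (Ff f P (t k) - Ff f P (t (k + 1))) := by
        intro k hk
        obtain ⟨h1, h2⟩ := hKmem k hk
        exact (hAprops k h1 h2).2.1
      rw [Finset.sum_congr rfl h2, ← ENNReal.ofReal_sum_of_nonneg, hKsum]
      intro k hk
      exact hnonneg k (Finset.mem_filter.1 hk).1
    · intro x hx y hy hxy
      simp only [Function.onFun, Set.disjoint_singleton_left, Set.mem_singleton_iff]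
      exact hxy
  haveI hfin : IsFiniteMeasure (dnegF f P) :=
    ⟨by rw [dnegF_univ f P hf hPc]; exact ENNReal.ofReal_lt_top⟩
  have hnull : dnegF f P (↑C)ᶜ = 0 := by
    rw [measure_compl C.measurableSet (measure_ne_top _ _), dnegF_univ f P hf hPc, hCmeas]
    simp
  set g : ℝ → ℝ := fun x => ∑ y ∈ C, if x = y then Tfb f P y else 0 with hg
  have hgC : ∀ x ∈ C, g x = Tfb f P x := by
    intro x hx
    rw [hg]
    simp only [Finset.sum_ite_eq, hx, if_true]
  have hae : Tfb f P =ᵐ[dnegF f P] g := by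
    rw [Filter.EventuallyEq, MeasureTheory.ae_iff]
    apply measure_mono_null _ hnull
    intro x hx
    simp only [Set.mem_setOf_eq] at hx
    intro hmem
    exact hx ((hgC x hmem).symm)
  have hint_g : MeasureTheory.Integrable g (dnegF f P) := by
    apply MeasureTheory.integrable_finset_sum
    intro y _
    have he : (fun x => if x = y then Tfb f P y else 0)
        = Set.indicator {y} (fun _ => Tfb f P y) := by
      ext x
      simp [Set.indicator_apply]
    rw [he]
    exact (MeasureTheory.integrable_const _).indicator (measurableSet_singleton y)
  have hint : MeasureTheory.Integrable (Tfb f P) (dnegF f P) := hint_g.congr hae.symm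
  have hres : (dnegF f P).restrict ↑C = dnegF f P := by
    apply Measure.restrict_eq_self_of_ae_mem
    rw [MeasureTheory.ae_iff]
    convert hnull using 2
    rfl
  have hio : MeasureTheory.IntegrableOn (Tfb f P) ↑C (dnegF f P) := by
    unfold MeasureTheory.IntegrableOn
    rw [hres]
    exact hint
  have hI := MeasureTheory.integral_finset (μ := dnegF f P) (f := Tfb f P) C hio
  rw [hres] at hI
  simp only [measureReal_def] at hI
  rw [hI, Finset.sum_image hinj]
  have hterm : ∀ k ∈ K, ((dnegF f P) {c k}).toReal • Tfb f P (c k)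
      = (Tf f P (t k) + Tf f P (t (k + 1))) / 2 * (Ff f P (t k) - Ff f P (t (k + 1))) := by
    intro k hk
    obtain ⟨h1, h2⟩ := hKmem k hk
    obtain ⟨-, hatom, htfb⟩ := hAprops k h1 h2
    rw [hatom, htfb, ENNReal.toReal_ofReal (hnonneg k (Finset.mem_filter.1 hk).1), smul_eq_mul]
    ring
  rw [Finset.sum_congr rfl hterm, hK, Finset.sum_filter_of_ne]
  intro k hk hne
  exact fun he => hne (by rw [he]; ring)
end

section
/- The probability that a uniformly random pair (x,y) ∈ P × P^c satisfies f(x) > f(y) equals the Lebesgue–Stieltjes integral ∫ T_f^+ d(−F_f), where T_f^+(t) = lim_{s↓t} T_f(s) is the right-continuous version of T_f. -/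
open MeasureTheory Set

/-- The right-continuous version `T_f^+` of `T_f`. -/
noncomputable def Tfp {Ω : Type*} [Fintype Ω] (f : Ω → ℝ) (P : Set Ω) (t : ℝ) : ℝ :=
  Function.rightLim (Tf f P) t

section Aux

open Filter Topology

lemma div_div_div_same' (a b n : ℝ) (hn : n ≠ 0) : (a / n) / (b / n) = a / b := by
  field_simp

lemma rightLim_count_aux {Ω : Type*} [Fintype Ω] (f : Ω → ℝ) (S : Set Ω) (c : ℝ) (x : ℝ) :
    Function.rightLim (fun t => ((f ⁻¹' Set.Icc t 1 ∩ S).ncard : ℝ) * c) x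
      = ((f ⁻¹' Set.Ioc x 1 ∩ S).ncard : ℝ) * c := by
  classical
  set B : Finset ℝ := (Finset.univ.image f).filter (fun v => x < v) with hB
  obtain ⟨m, hxm, hm⟩ : ∃ m : ℝ, x < m ∧ ∀ ω : Ω, x < f ω → m ≤ f ω := by
    by_cases hne : B.Nonempty
    · refine ⟨B.min' hne, ?_, fun ω hω => ?_⟩
      · exact (Finset.mem_filter.mp (B.min'_mem hne)).2
      · exact B.min'_le _ (Finset.mem_filter.mpr ⟨Finset.mem_image_of_mem f (Finset.mem_univ ω), hω⟩)
    · refine ⟨x + 1, by linarith, fun ω hω => absurd ?_ hne⟩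
      exact ⟨f ω, Finset.mem_filter.mpr ⟨Finset.mem_image_of_mem f (Finset.mem_univ ω), hω⟩⟩
  have hev : ∀ᶠ t in 𝓝[>] x,
      (fun t => ((f ⁻¹' Set.Icc t 1 ∩ S).ncard : ℝ) * c) t
        = ((f ⁻¹' Set.Ioc x 1 ∩ S).ncard : ℝ) * c := by
    filter_upwards [Ioo_mem_nhdsGT_of_mem (Set.mem_Ico.mpr ⟨le_refl x, hxm⟩)] with t ht
    have : f ⁻¹' Set.Icc t 1 ∩ S = f ⁻¹' Set.Ioc x 1 ∩ S := by
      ext ω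
      simp only [Set.mem_inter_iff, Set.mem_preimage, Set.mem_Icc, Set.mem_Ioc]
      constructor
      · rintro ⟨⟨h1, h2⟩, h3⟩; exact ⟨⟨ht.1.trans_le h1, h2⟩, h3⟩
      · rintro ⟨⟨h1, h2⟩, h3⟩; exact ⟨⟨le_trans ht.2.le (hm ω h1), h2⟩, h3⟩
    rw [this]
  refine rightLim_eq_of_tendsto ?_
  · exact Tendsto.congr' (hev.mono fun t ht => ht.symm) tendsto_const_nhds

lemma split_count {Ω : Type*} [Fintype Ω] (f : Ω → ℝ) (S : Set Ω)
    (hf : ∀ ω, f ω ≤ 1) {a b : ℝ} (hab : a < b) :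
    (f ⁻¹' Set.Ioc a 1 ∩ S).ncard
      = (f ⁻¹' Set.Ioc a b ∩ S).ncard + (f ⁻¹' Set.Ioc b 1 ∩ S).ncard := by
  classical
  have hU : f ⁻¹' Set.Ioc a 1 ∩ S = (f ⁻¹' Set.Ioc a b ∩ S) ∪ (f ⁻¹' Set.Ioc b 1 ∩ S) := by
    ext ω
    simp only [Set.mem_inter_iff, Set.mem_union, Set.mem_preimage, Set.mem_Ioc]
    constructor
    · rintro ⟨⟨h1, h2⟩, h3⟩
      rcases le_or_gt (f ω) b with h | h
      · exact Or.inl ⟨⟨h1, h⟩, h3⟩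
      · exact Or.inr ⟨⟨h, h2⟩, h3⟩
    · rintro (⟨⟨h1, h2⟩, h3⟩ | ⟨⟨h1, h2⟩, h3⟩)
      · exact ⟨⟨h1, hf ω⟩, h3⟩
      · exact ⟨⟨hab.trans h1, h2⟩, h3⟩
  have hD : Disjoint (f ⁻¹' Set.Ioc a b ∩ S) (f ⁻¹' Set.Ioc b 1 ∩ S) := by
    rw [Set.disjoint_left]
    rintro ω ⟨h1, -⟩ ⟨h2, -⟩
    exact absurd h2.1 (not_lt.mpr h1.2)
  rw [hU, Set.ncard_union_eq hD (Set.toFinite _) (Set.toFinite _)]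

lemma fiber_count {Ω : Type*} [Fintype Ω] (f : Ω → ℝ) (S : Set Ω) (A : Set ℝ)
    [DecidablePred (· ∈ A)] :
    ∑ v ∈ ((Set.toFinite S).toFinset.image f).filter (· ∈ A), (f ⁻¹' {v} ∩ S).ncard
      = (f ⁻¹' A ∩ S).ncard := by
  classical
  have h1 : (f ⁻¹' A ∩ S).ncard = (Set.toFinite (f ⁻¹' A ∩ S)).toFinset.card :=
    Set.ncard_eq_toFinset_card _ (Set.toFinite _)
  rw [h1, Finset.card_eq_sum_card_fiberwise (f := f)
      (t := ((Set.toFinite S).toFinset.image f).filter (· ∈ A))]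
  · refine Finset.sum_congr rfl fun v hv => ?_
    rw [Set.ncard_eq_toFinset_card (f ⁻¹' {v} ∩ S) (Set.toFinite _)]
    congr 1
    ext ω
    simp only [Finset.mem_filter, Set.Finite.mem_toFinset, Set.mem_inter_iff, Set.mem_preimage,
      Set.mem_singleton_iff]
    obtain ⟨-, hvA⟩ := Finset.mem_filter.mp hv
    constructor
    · rintro ⟨hfv, hS⟩; exact ⟨⟨by rw [hfv]; exact hvA, hS⟩, hfv⟩
    · rintro ⟨⟨-, hS⟩, hfv⟩; exact ⟨hfv, hS⟩
  · intro ω hω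
    simp only [Finset.mem_coe, Set.Finite.mem_toFinset, Set.mem_inter_iff, Set.mem_preimage] at hω
    exact Finset.mem_filter.mpr ⟨Finset.mem_image_of_mem f ((Set.toFinite S).mem_toFinset.mpr hω.2), hω.1⟩

lemma pairs_count {Ω : Type*} [Fintype Ω] (f : Ω → ℝ) (P : Set Ω) (hf : ∀ ω, f ω ≤ 1) :
    ∑ v ∈ (Set.toFinite (Pᶜ : Set Ω)).toFinset.image f,
        (f ⁻¹' Set.Ioc v 1 ∩ P).ncard * (f ⁻¹' {v} ∩ Pᶜ).ncard
      = ({p : Ω × Ω | f p.1 > f p.2} ∩ P ×ˢ Pᶜ).ncard := by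
  classical
  set PcF : Finset Ω := (Set.toFinite (Pᶜ : Set Ω)).toFinset with hPcF
  set E : Finset (Ω × Ω) :=
    (Set.toFinite ({p : Ω × Ω | f p.1 > f p.2} ∩ P ×ˢ Pᶜ)).toFinset with hE
  rw [Set.ncard_eq_toFinset_card _ (Set.toFinite _)]
  have hfib : ∀ y ∈ PcF, ({p ∈ E | p.2 = y} : Finset (Ω × Ω)).card
      = (f ⁻¹' Set.Ioc (f y) 1 ∩ P).ncard := by
    intro y hy
    have himg : ({p ∈ E | p.2 = y} : Finset (Ω × Ω))
        = (Set.toFinite (f ⁻¹' Set.Ioc (f y) 1 ∩ P)).toFinset.image (fun x => (x, y)) := by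
      ext p
      simp only [Finset.mem_filter, hE, Set.Finite.mem_toFinset, Set.mem_inter_iff,
        Set.mem_setOf_eq, Set.mem_prod, Finset.mem_image, Set.mem_preimage, Set.mem_Ioc]
      constructor
      · rintro ⟨⟨hgt, hP1, hP2⟩, hsnd⟩
        exact ⟨p.1, ⟨⟨by rw [← hsnd]; exact hgt, hf p.1⟩, hP1⟩, by rw [← hsnd]⟩
      · rintro ⟨x, ⟨⟨hgt, -⟩, hP1⟩, rfl⟩
        exact ⟨⟨hgt, hP1, (Set.toFinite _).mem_toFinset.mp hy⟩, rfl⟩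
    rw [himg, Finset.card_image_of_injective _ (fun a b h => (Prod.mk.injEq _ _ _ _ ▸ h : _ ∧ _).1),
      Set.ncard_eq_toFinset_card _ (Set.toFinite _)]
  have hsum1 : E.card = ∑ y ∈ PcF, (f ⁻¹' Set.Ioc (f y) 1 ∩ P).ncard := by
    rw [Finset.card_eq_sum_card_fiberwise (f := Prod.snd) (t := PcF)
      (fun p hp => (Set.toFinite _).mem_toFinset.mpr
        (((Set.toFinite _).mem_toFinset.mp hp).2.2))]
    exact Finset.sum_congr rfl hfib
  rw [hsum1, ← Finset.sum_fiberwise_of_maps_to (g := f) (t := PcF.image f)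
    (fun y hy => Finset.mem_image_of_mem f hy) (fun y => (f ⁻¹' Set.Ioc (f y) 1 ∩ P).ncard)]
  refine Finset.sum_congr rfl fun v hv => ?_
  have : ∀ y ∈ ({y ∈ PcF | f y = v} : Finset Ω),
      (f ⁻¹' Set.Ioc (f y) 1 ∩ P).ncard = (f ⁻¹' Set.Ioc v 1 ∩ P).ncard := by
    intro y hy
    rw [(Finset.mem_filter.mp hy).2]
  rw [Finset.sum_congr rfl this, Finset.sum_const, smul_eq_mul, mul_comm]
  congr 1
  rw [Set.ncard_eq_toFinset_card _ (Set.toFinite _)]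
  congr 1
  ext ω
  simp only [Finset.mem_filter, Set.Finite.mem_toFinset, Set.mem_inter_iff, Set.mem_preimage,
    Set.mem_singleton_iff]
  constructor
  · rintro ⟨h1, h2⟩
    exact ⟨(Set.toFinite _).mem_toFinset.mpr h2, h1⟩
  · rintro ⟨h1, h2⟩
    exact ⟨h2, (Set.toFinite _).mem_toFinset.mp h1⟩

end Aux

theorem sep_prob_eq_integral_Tfp {Ω : Type*} [Fintype Ω] [Nonempty Ω] (f : Ω → ℝ) (P : Set Ω)
    (hf : ∀ ω, f ω ∈ Set.Icc (0:ℝ) 1) (hP : P.Nonempty) (hPc : Pᶜ.Nonempty) :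
    unifP ({p : Ω × Ω | f p.1 > f p.2} ∩ P ×ˢ Pᶜ) / (unifP P * unifP Pᶜ) = ∫ x, Tfp f P x ∂(dnegF f P) := by
  classical
  have hf1 : ∀ ω, f ω ≤ 1 := fun ω => (hf ω).2
  have hn : ((Fintype.card Ω : ℝ)) ≠ 0 := by
    exact_mod_cast (Fintype.card_pos).ne'
  set cP : ℝ := (P.ncard : ℝ) with hcP
  set cPc : ℝ := ((Pᶜ : Set Ω).ncard : ℝ) with hcPc
  have hcP0 : cP ≠ 0 := by
    rw [hcP]; exact_mod_cast ((Set.ncard_pos (Set.toFinite P)).mpr hP).ne'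
  have hcPc0 : cPc ≠ 0 := by
    rw [hcPc]; exact_mod_cast ((Set.ncard_pos (Set.toFinite _)).mpr hPc).ne'
  set V : Finset ℝ := (Set.toFinite (Pᶜ : Set Ω)).toFinset.image f with hV
  -- the right-continuous version of Tf
  have hTf : Tf f P = fun t => ((f ⁻¹' Set.Icc t 1 ∩ P).ncard : ℝ) * (1 / cP) := by
    funext t
    rw [Tf, unifP, unifP, div_div_div_same' _ _ _ hn]
    ring
  have hTfp : Tfp f P = fun x => ((f ⁻¹' Set.Ioc x 1 ∩ P).ncard : ℝ) * (1 / cP) := by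
    funext x
    rw [Tfp, hTf, rightLim_count_aux]
  -- values of the Stieltjes function of -Ff
  have hFf : (fun t => -(Ff f P t))
      = fun t => ((f ⁻¹' Set.Icc t 1 ∩ Pᶜ).ncard : ℝ) * (-(1 / cPc)) := by
    funext t
    rw [Ff, unifP, unifP, div_div_div_same' _ _ _ hn]
    ring
  have hFval : ∀ b : ℝ, (negFf_mono f P).stieltjesFunction b
      = ((f ⁻¹' Set.Ioc b 1 ∩ Pᶜ).ncard : ℝ) * (-(1 / cPc)) := by
    intro b
    rw [(negFf_mono f P).stieltjesFunction_eq, hFf, rightLim_count_aux]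
  -- the measure dnegF is a finite combination of Dirac masses
  have hmeas : dnegF f P = ∑ v ∈ V,
      (ENNReal.ofReal (((f ⁻¹' {v} ∩ Pᶜ).ncard : ℝ) / cPc)) • Measure.dirac v := by
    show (negFf_mono f P).stieltjesFunction.measure = _
    refine Measure.ext_of_Ioc _ _ (fun a b hab => ?_)
    rw [StieltjesFunction.measure_Ioc, hFval, hFval]
    have hsplit : ((f ⁻¹' Set.Ioc a 1 ∩ Pᶜ).ncard : ℝ)
        = ((f ⁻¹' Set.Ioc a b ∩ Pᶜ).ncard : ℝ) + ((f ⁻¹' Set.Ioc b 1 ∩ Pᶜ).ncard : ℝ) := by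
      exact_mod_cast congrArg (Nat.cast : ℕ → ℝ) (split_count f (Pᶜ) hf1 hab)
    have hLHS : ((f ⁻¹' Set.Ioc b 1 ∩ Pᶜ).ncard : ℝ) * (-(1 / cPc))
        - ((f ⁻¹' Set.Ioc a 1 ∩ Pᶜ).ncard : ℝ) * (-(1 / cPc))
        = ((f ⁻¹' Set.Ioc a b ∩ Pᶜ).ncard : ℝ) / cPc := by
      rw [hsplit]; ring
    rw [hLHS]
    -- compute the RHS
    have : ∀ v : ℝ, (Measure.dirac v) (Set.Ioc a b) = Set.indicator (Set.Ioc a b) 1 v :=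
      fun v => Measure.dirac_apply' v measurableSet_Ioc
    simp only [Measure.coe_finset_sum, Finset.sum_apply, Measure.smul_apply, this,
      smul_eq_mul, Set.indicator_apply, Set.mem_Ioc, Pi.one_apply, mul_ite, mul_one, mul_zero]
    rw [← Finset.sum_filter]
    have hflt : V.filter (fun v => a < v ∧ v ≤ b) = V.filter (· ∈ Set.Ioc a b) := by
      ext v; simp [Set.mem_Ioc]
    rw [hflt, ← ENNReal.ofReal_sum_of_nonneg
      (fun v _ => div_nonneg (Nat.cast_nonneg _) (Nat.cast_nonneg _))]
    congr 1
    rw [← Finset.sum_div]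
    congr 1
    exact_mod_cast congrArg (Nat.cast : ℕ → ℝ) (fiber_count f (Pᶜ) (Set.Ioc a b)).symm
  -- measurability and integrability of Tfp
  have hanti : Antitone (Tfp f P) := by
    rw [hTfp]
    intro x y hxy
    have hsub : f ⁻¹' Set.Ioc y 1 ∩ P ⊆ f ⁻¹' Set.Ioc x 1 ∩ P := fun ω hω =>
      ⟨⟨hxy.trans_lt hω.1.1, hω.1.2⟩, hω.2⟩
    have : ((f ⁻¹' Set.Ioc y 1 ∩ P).ncard : ℝ) ≤ ((f ⁻¹' Set.Ioc x 1 ∩ P).ncard : ℝ) := by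
      exact_mod_cast Set.ncard_le_ncard hsub (Set.toFinite _)
    have h1 : (0:ℝ) ≤ 1 / cP := by positivity
    exact mul_le_mul_of_nonneg_right this h1
  have hmeasb : Measurable (Tfp f P) := hanti.measurable
  have hint : ∀ v ∈ V, Integrable (Tfp f P)
      ((ENNReal.ofReal (((f ⁻¹' {v} ∩ Pᶜ).ncard : ℝ) / cPc)) • Measure.dirac v) := by
    intro v _
    refine Integrable.smul_measure ?_ ENNReal.ofReal_ne_top
    refine ⟨hmeasb.aestronglyMeasurable, ?_⟩
    simp only [HasFiniteIntegral, lintegral_dirac]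
    exact ENNReal.coe_lt_top
  rw [hmeas, integral_finset_sum_measure hint]
  have hterm : ∀ v ∈ V, ∫ x, Tfp f P x
        ∂((ENNReal.ofReal (((f ⁻¹' {v} ∩ Pᶜ).ncard : ℝ) / cPc)) • Measure.dirac v)
      = (((f ⁻¹' Set.Ioc v 1 ∩ P).ncard * (f ⁻¹' {v} ∩ Pᶜ).ncard : ℕ) : ℝ) * (1 / (cP * cPc)) := by
    intro v _
    rw [integral_smul_measure, integral_dirac,
      ENNReal.toReal_ofReal (div_nonneg (Nat.cast_nonneg _) (Nat.cast_nonneg _)),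
      smul_eq_mul, hTfp]
    push_cast
    field_simp
    rw [← hcPc, mul_div_cancel_right₀ _ hcPc0]
  rw [Finset.sum_congr rfl hterm, ← Finset.sum_mul, ← Nat.cast_sum, pairs_count f P hf1]
  -- final arithmetic
  rw [unifP, unifP, unifP, Fintype.card_prod]
  push_cast
  rw [← hcP, ← hcPc]
  field_simp
end

section
/- If f(P) ∩ f(P^c) = ∅, then the area beneath the ROC curve equals the probability that f separates a random positive from a random negative observation: ∫ T_f^b d(−F_f) = (μ⊗μ)(E | P × P^c). -/
open MeasureTheory Set

section AucAux

open Filter Function Topology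
open scoped Classical ENNReal

lemma gap_right (V : Finset ℝ) (t : ℝ) : ∃ ε > 0, ∀ v ∈ V, t < v → t + ε ≤ v := by
  rcases (V.filter (fun v => t < v)).eq_empty_or_nonempty with h | h
  · exact ⟨1, one_pos, fun v hv htv =>
      absurd (Finset.filter_eq_empty_iff.1 h hv) (by simp [htv])⟩
  · refine ⟨(V.filter (fun v => t < v)).min' h - t, ?_, fun v hv htv => ?_⟩
    · have h1 := Finset.min'_mem _ h
      simp only [Finset.mem_filter] at h1
      linarith [h1.2]
    · have := Finset.min'_le _ v (Finset.mem_filter.2 ⟨hv, htv⟩)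
      linarith

lemma gap_left (V : Finset ℝ) (t : ℝ) : ∃ ε > 0, ∀ v ∈ V, v < t → v ≤ t - ε := by
  obtain ⟨ε, hε, h⟩ := gap_right (V.image (fun v => -v)) (-t)
  refine ⟨ε, hε, fun v hv hvt => ?_⟩
  have := h (-v) (Finset.mem_image_of_mem _ hv) (by linarith)
  linarith

noncomputable def cntGE {Ω : Type*} (f : Ω → ℝ) (S : Finset Ω) (t : ℝ) : ℕ :=
  (S.filter fun ω => t ≤ f ω).card

noncomputable def cntGT {Ω : Type*} (f : Ω → ℝ) (S : Finset Ω) (t : ℝ) : ℕ :=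
  (S.filter fun ω => t < f ω).card

lemma rate_eq {Ω : Type*} [Fintype Ω] [Nonempty Ω] (f : Ω → ℝ)
    (hf : ∀ ω, f ω ∈ Set.Icc (0:ℝ) 1) (S : Set Ω) (Sf : Finset Ω)
    (hS : ∀ ω, ω ∈ Sf ↔ ω ∈ S) (t : ℝ) :
    unifP (f ⁻¹' Set.Icc t 1 ∩ S) / unifP S = (cntGE f Sf t : ℝ) / Sf.card := by
  have hset : f ⁻¹' Set.Icc t 1 ∩ S = ↑(Sf.filter fun ω => t ≤ f ω) := by
    ext ω
    simp only [Finset.coe_filter, mem_setOf_eq, mem_inter_iff, mem_preimage, mem_Icc, hS]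
    exact ⟨fun h => ⟨h.2, h.1.1⟩, fun h => ⟨⟨h.2, (hf ω).2⟩, h.1⟩⟩
  have hS' : S = ↑Sf := by ext ω; simp [hS]
  have hn : (Fintype.card Ω : ℝ) ≠ 0 := by
    exact_mod_cast Fintype.card_ne_zero
  unfold unifP
  rw [hset, Set.ncard_coe_finset, hS', Set.ncard_coe_finset,
    div_div_div_cancel_right₀ hn]
  rfl

lemma rightLim_negFf {Ω : Type*} [Fintype Ω] [Nonempty Ω] (f : Ω → ℝ)
    (hf : ∀ ω, f ω ∈ Set.Icc (0:ℝ) 1) (P : Set Ω) (Qf : Finset Ω)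
    (hQ : ∀ ω, ω ∈ Qf ↔ ω ∈ Pᶜ) (t : ℝ) :
    Function.rightLim (fun s => -(Ff f P s)) t = -((cntGT f Qf t : ℝ) / Qf.card) := by
  obtain ⟨ε, hε, hgap⟩ := gap_right (Qf.image f) t
  refine rightLim_eq_of_tendsto
    (Tendsto.congr' ?_ tendsto_const_nhds)
  filter_upwards [Ioo_mem_nhdsGT_of_mem (Set.left_mem_Ico.2 (by linarith : t < t + ε))]
    with s hs
  have hFf : Ff f P s = (cntGE f Qf s : ℝ) / Qf.card := rate_eq f hf _ Qf hQ s
  have hcnt : cntGE f Qf s = cntGT f Qf t := by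
    apply congrArg Finset.card
    apply Finset.filter_congr
    intro ω hω
    constructor
    · intro h; exact lt_of_lt_of_le hs.1 h
    · intro h
      have := hgap (f ω) (Finset.mem_image_of_mem f hω) h
      linarith [hs.2]
  rw [hFf, hcnt]

lemma Tfb_eq {Ω : Type*} [Fintype Ω] [Nonempty Ω] (f : Ω → ℝ)
    (hf : ∀ ω, f ω ∈ Set.Icc (0:ℝ) 1) (P : Set Ω) (Pf : Finset Ω)
    (hPf : ∀ ω, ω ∈ Pf ↔ ω ∈ P) (v : ℝ) (hv : ∀ ω ∈ Pf, f ω ≠ v) :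
    Tfb f P v = (cntGT f Pf v : ℝ) / Pf.card := by
  have hTfs : ∀ s, Tf f P s = (cntGE f Pf s : ℝ) / Pf.card := fun s =>
    rate_eq f hf _ Pf hPf s
  have hge_gt : cntGE f Pf v = cntGT f Pf v := by
    apply congrArg Finset.card
    apply Finset.filter_congr
    intro ω hω
    exact ⟨fun h => lt_of_le_of_ne h (Ne.symm (hv ω hω)), le_of_lt⟩
  have hright : Function.rightLim (Tf f P) v = (cntGT f Pf v : ℝ) / Pf.card := by
    obtain ⟨ε, hε, hgap⟩ := gap_right (Pf.image f) v
    refine rightLim_eq_of_tendsto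
      (Tendsto.congr' ?_ tendsto_const_nhds)
    filter_upwards [Ioo_mem_nhdsGT_of_mem (Set.left_mem_Ico.2 (by linarith : v < v + ε))]
      with s hs
    have hcnt : cntGE f Pf s = cntGT f Pf v := by
      apply congrArg Finset.card
      apply Finset.filter_congr
      intro ω hω
      constructor
      · intro h; exact lt_of_lt_of_le hs.1 h
      · intro h
        have := hgap (f ω) (Finset.mem_image_of_mem f hω) h
        linarith [hs.2]
    rw [hTfs s, hcnt]
  have hleft : Function.leftLim (Tf f P) v = (cntGE f Pf v : ℝ) / Pf.card := by
    obtain ⟨ε, hε, hgap⟩ := gap_left (Pf.image f) v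
    refine leftLim_eq_of_tendsto
      (Tendsto.congr' ?_ tendsto_const_nhds)
    filter_upwards [Ioo_mem_nhdsLT_of_mem (Set.right_mem_Ioc.2 (by linarith : v - ε < v))]
      with s hs
    have hcnt : cntGE f Pf s = cntGE f Pf v := by
      apply congrArg Finset.card
      apply Finset.filter_congr
      intro ω hω
      constructor
      · intro h
        by_contra hlt
        push_neg at hlt
        have := hgap (f ω) (Finset.mem_image_of_mem f hω) hlt
        linarith [hs.1]
      · intro h; linarith [hs.2]
    rw [hTfs s, hcnt]
  rw [Tfb, hright, hleft, hge_gt]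
  ring

lemma dnegF_eq {Ω : Type*} [Fintype Ω] [Nonempty Ω] (f : Ω → ℝ)
    (hf : ∀ ω, f ω ∈ Set.Icc (0:ℝ) 1) (P : Set Ω) (Qf : Finset Ω)
    (hQ : ∀ ω, ω ∈ Qf ↔ ω ∈ Pᶜ) (hq : Qf.Nonempty) :
    dnegF f P = (Qf.card : ℝ≥0∞)⁻¹ • ∑ ω ∈ Qf, Measure.dirac (f ω) := by
  have hq0 : (0:ℝ) < Qf.card := by exact_mod_cast Finset.card_pos.2 hq
  show (negFf_mono f P).stieltjesFunction.measure = _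
  refine Measure.ext_of_Ioc _ _ (fun a b hab => ?_)
  rw [StieltjesFunction.measure_Ioc]
  have hGa : (negFf_mono f P).stieltjesFunction a = -((cntGT f Qf a : ℝ) / Qf.card) :=
    rightLim_negFf f hf P Qf hQ a
  have hGb : (negFf_mono f P).stieltjesFunction b = -((cntGT f Qf b : ℝ) / Qf.card) :=
    rightLim_negFf f hf P Qf hQ b
  set m := (Qf.filter fun ω => a < f ω ∧ f ω ≤ b).card with hm
  have hsplit : cntGT f Qf a = m + cntGT f Qf b := by
    have hun : (Qf.filter fun ω => a < f ω)
        = (Qf.filter fun ω => a < f ω ∧ f ω ≤ b) ∪ (Qf.filter fun ω => b < f ω) := by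
      rw [← Finset.filter_or]
      apply Finset.filter_congr
      intro ω _
      constructor
      · intro h
        by_cases hb : f ω ≤ b
        · exact Or.inl ⟨h, hb⟩
        · exact Or.inr (not_le.1 hb)
      · rintro (⟨h, _⟩ | h)
        · exact h
        · linarith
    have hdisj2 : Disjoint (Qf.filter fun ω => a < f ω ∧ f ω ≤ b)
        (Qf.filter fun ω => b < f ω) := by
      refine Finset.disjoint_left.2 (fun ω h1 h2 => ?_)
      simp only [Finset.mem_filter] at h1 h2
      linarith [h1.2.2, h2.2]
    rw [cntGT, cntGT, hun, Finset.card_union_of_disjoint hdisj2]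
  have harith : -((cntGT f Qf b : ℝ) / Qf.card) - (-((cntGT f Qf a : ℝ) / Qf.card))
      = (m : ℝ) / Qf.card := by
    have hc : (cntGT f Qf a : ℝ) = (m : ℝ) + (cntGT f Qf b : ℝ) := by
      exact_mod_cast congrArg (Nat.cast (R := ℝ)) hsplit
    rw [hc]
    ring
  have hsum : (∑ ω ∈ Qf, Measure.dirac (f ω)) (Set.Ioc a b) = (m : ℝ≥0∞) := by
    rw [Measure.finset_sum_apply]
    have he : ∀ ω ∈ Qf, Measure.dirac (f ω) (Set.Ioc a b)
        = if a < f ω ∧ f ω ≤ b then (1:ℝ≥0∞) else 0 := by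
      intro ω _
      rw [Measure.dirac_apply' _ measurableSet_Ioc]
      by_cases h : a < f ω ∧ f ω ≤ b
      · simp [Set.indicator, Set.mem_Ioc, h]
      · simp only [Set.indicator, Set.mem_Ioc]
        rw [if_neg h, if_neg h]
    rw [Finset.sum_congr rfl he, Finset.sum_boole]
  rw [hGa, hGb, harith, Measure.smul_apply, hsum, smul_eq_mul, mul_comm, ← div_eq_mul_inv,
    ENNReal.ofReal_div_of_pos hq0, ENNReal.ofReal_natCast, ENNReal.ofReal_natCast]

end AucAux

theorem auc_eq_sep_prob {Ω : Type*} [Fintype Ω] [Nonempty Ω] (f : Ω → ℝ) (P : Set Ω)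
    (hf : ∀ ω, f ω ∈ Set.Icc (0:ℝ) 1) (hP : P.Nonempty) (hPc : Pᶜ.Nonempty)
    (hdisj : f '' P ∩ f '' Pᶜ = ∅) :
    ∫ x, Tfb f P x ∂(dnegF f P) = unifP ({p : Ω × Ω | f p.1 > f p.2} ∩ P ×ˢ Pᶜ) / (unifP P * unifP Pᶜ) := by
  classical
  set Pf : Finset Ω := Finset.univ.filter (· ∈ P) with hPfdef
  set Qf : Finset Ω := Finset.univ.filter (· ∈ Pᶜ) with hQfdef
  have hPf : ∀ ω, ω ∈ Pf ↔ ω ∈ P := fun ω => by simp [hPfdef]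
  have hQf : ∀ ω, ω ∈ Qf ↔ ω ∈ Pᶜ := fun ω => by simp [hQfdef]
  have hPne : Pf.Nonempty := ⟨hP.choose, (hPf _).2 hP.choose_spec⟩
  have hQne : Qf.Nonempty := ⟨hPc.choose, (hQf _).2 hPc.choose_spec⟩
  have hp0 : (0:ℝ) < Pf.card := by exact_mod_cast Finset.card_pos.2 hPne
  have hq0 : (0:ℝ) < Qf.card := by exact_mod_cast Finset.card_pos.2 hQne
  have hn0 : (0:ℝ) < Fintype.card Ω := by exact_mod_cast Fintype.card_pos
  have hint : ∀ ω ∈ Qf, MeasureTheory.Integrable (Tfb f P) (MeasureTheory.Measure.dirac (f ω)) := by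
    intro ω _
    have hcongr : (fun _ : ℝ => Tfb f P (f ω)) =ᵐ[MeasureTheory.Measure.dirac (f ω)] Tfb f P := by
      rw [MeasureTheory.ae_dirac_eq]
      exact Filter.eventually_pure.2 rfl
    exact (MeasureTheory.integrable_const _).congr hcongr
  rw [dnegF_eq f hf P Qf hQf hQne, MeasureTheory.integral_smul_measure,
    MeasureTheory.integral_finset_sum_measure hint]
  simp_rw [MeasureTheory.integral_dirac]
  have hTfbval : ∀ ω ∈ Qf, Tfb f P (f ω) = (cntGT f Pf (f ω) : ℝ) / Pf.card := by
    intro ω hω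
    refine Tfb_eq f hf P Pf hPf (f ω) ?_
    intro ω₁ hω₁ heq
    have hmem : f ω₁ ∈ f '' P ∩ f '' Pᶜ :=
      ⟨⟨ω₁, (hPf ω₁).1 hω₁, rfl⟩, ⟨ω, (hQf ω).1 hω, heq.symm⟩⟩
    rw [hdisj] at hmem
    exact hmem
  rw [Finset.sum_congr rfl hTfbval]
  -- right-hand side
  have hE : {p : Ω × Ω | f p.1 > f p.2} ∩ P ×ˢ Pᶜ
      = ↑((Pf ×ˢ Qf).filter fun pr => f pr.2 < f pr.1) := by
    ext ⟨x, y⟩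
    simp only [Set.mem_inter_iff, Set.mem_setOf_eq, Set.mem_prod, Finset.coe_filter,
      Finset.mem_product, hPf, hQf]
    tauto
  have hPcoe : P = ↑Pf := by ext ω; simp [hPf]
  have hQcoe : Pᶜ = ↑Qf := by ext ω; simp [hQf]
  have hsum : ((((Pf ×ˢ Qf).filter fun pr => f pr.2 < f pr.1).card : ℝ))
      = ∑ ω ∈ Qf, (cntGT f Pf (f ω) : ℝ) := by
    rw [Finset.natCast_card_filter, Finset.sum_product_right]
    refine Finset.sum_congr rfl fun ω _ => ?_
    rw [cntGT, Finset.natCast_card_filter]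
  rw [hE]
  unfold unifP
  rw [hQcoe, hPcoe, Set.ncard_coe_finset, Set.ncard_coe_finset, Set.ncard_coe_finset,
    Fintype.card_prod]
  rw [ENNReal.toReal_inv, ENNReal.toReal_natCast, smul_eq_mul, hsum, ← Finset.sum_div]
  push_cast
  generalize (∑ x ∈ Qf, (cntGT f Pf (f x) : ℝ)) = S
  generalize (Pf.card : ℝ) = p at *
  generalize (Qf.card : ℝ) = q at *
  generalize (Fintype.card Ω : ℝ) = n at *
  field_simp
end

section
/- The difference between the AUC and the separation probability equals half the sum over shared scores of the products of conditional level-set masses: A − Pr = (1/2) Σ_{τ ∈ f(P) ∩ f(P^c)} μ(f^{-1}({τ}) | P) · μ(f^{-1}({τ}) | P^c), where A = ∫ T_f^b d(−F_f) and Pr = (μ⊗μ)(E | P × P^c). -/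
open MeasureTheory Set

section Aux

open Filter Topology

private lemma rightLim_eq_const {g : ℝ → ℝ} {τ c δ : ℝ} (hδ : 0 < δ)
    (h : ∀ u, τ < u → u < τ + δ → g u = c) : Function.rightLim g τ = c := by
  refine rightLim_eq_of_tendsto ?_
  refine Filter.Tendsto.congr' ?_ (tendsto_const_nhds (α := ℝ) (f := 𝓝[>] τ))
  exact Filter.eventuallyEq_of_mem (Ioo_mem_nhdsGT_of_mem ⟨le_rfl, by linarith⟩)
    (fun u hu => (h u hu.1 hu.2).symm)

private lemma leftLim_eq_const {g : ℝ → ℝ} {τ c δ : ℝ} (hδ : 0 < δ)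
    (h : ∀ u, τ - δ < u → u < τ → g u = c) : Function.leftLim g τ = c := by
  refine leftLim_eq_of_tendsto ?_
  refine Filter.Tendsto.congr' ?_ (tendsto_const_nhds (α := ℝ) (f := 𝓝[<] τ))
  exact Filter.eventuallyEq_of_mem (Ioo_mem_nhdsLT_of_mem ⟨by linarith, le_rfl⟩)
    (fun u hu => (h u hu.1 hu.2).symm)

private lemma gap_lemma {Ω : Type*} [Fintype Ω] [Nonempty Ω] (f : Ω → ℝ) (t : ℝ) :
    ∃ δ > 0, (∀ u, t < u → u < t + δ → ∀ ω, (u ≤ f ω ↔ t < f ω)) ∧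
             (∀ u, t - δ < u → u < t → ∀ ω, (u < f ω ↔ t ≤ f ω)) := by
  classical
  obtain ⟨δ, hδpos, hδ⟩ : ∃ δ > 0, ∀ ω, f ω ≠ t → δ ≤ |f ω - t| := by
    refine ⟨Finset.univ.inf' Finset.univ_nonempty
      (fun ω => if f ω = t then 1 else |f ω - t|), ?_, ?_⟩
    · rw [gt_iff_lt, Finset.lt_inf'_iff]
      intro ω _
      split_ifs with h
      · norm_num
      · exact abs_pos.mpr (sub_ne_zero.mpr h)
    · intro ω hω
      have := Finset.inf'_le (fun ω => if f ω = t then 1 else |f ω - t|)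
        (Finset.mem_univ ω)
      simp only [hω, ↓reduceIte] at this; exact this
  refine ⟨δ, hδpos, fun u hu1 hu2 ω => ?_, fun u hu1 hu2 ω => ?_⟩
  · constructor
    · intro h; linarith
    · intro h
      have hne : f ω ≠ t := by linarith
      have := hδ ω hne
      rw [abs_of_pos (by linarith)] at this
      linarith
  · constructor
    · intro h
      by_contra hc
      push_neg at hc
      have hne : f ω ≠ t := by linarith
      have := hδ ω hne
      rw [abs_of_neg (by linarith)] at this
      linarith
    · intro h; linarith

end Aux

open Filter Topology

theorem auc_sub_sep_prob_eq {Ω : Type*} [Fintype Ω] [Nonempty Ω] (f : Ω → ℝ) (P : Set Ω)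
    (hf : ∀ ω, f ω ∈ Set.Icc (0:ℝ) 1) (hP : P.Nonempty) (hPc : Pᶜ.Nonempty) :
    ∫ x, Tfb f P x ∂(dnegF f P) - (unifP ({p : Ω × Ω | f p.1 > f p.2} ∩ P ×ˢ Pᶜ) / (unifP P * unifP Pᶜ))
      = (1 / 2) * ∑ τ ∈ (Set.Finite.inter_of_left ((Set.toFinite P).image f) (f '' Pᶜ)).toFinset,
          (unifP (f ⁻¹' {τ} ∩ P) / unifP P) * (unifP (f ⁻¹' {τ} ∩ Pᶜ) / unifP Pᶜ) := by
  classical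
  have hN : (0:ℝ) < Fintype.card Ω := by exact_mod_cast Fintype.card_pos
  have hp : (0:ℝ) < P.ncard := by exact_mod_cast (Set.ncard_pos P.toFinite).mpr hP
  have hq : (0:ℝ) < Pᶜ.ncard := by exact_mod_cast (Set.ncard_pos (Pᶜ.toFinite)).mpr hPc
  have hN' : (Fintype.card Ω : ℝ) ≠ 0 := ne_of_gt hN
  have hp' : (P.ncard : ℝ) ≠ 0 := ne_of_gt hp
  have hq' : ((Pᶜ).ncard : ℝ) ≠ 0 := ne_of_gt hq
  -- intersecting with Icc is intersecting with Ici
  have hIcc : ∀ (t : ℝ) (S : Set Ω), f ⁻¹' Set.Icc t 1 ∩ S = f ⁻¹' Set.Ici t ∩ S := by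
    intro t S
    ext ω
    have h1 := (hf ω).2
    simp only [Set.mem_inter_iff, Set.mem_preimage, Set.mem_Icc, Set.mem_Ici]
    tauto
  have hTf : ∀ t, Tf f P t = ((f ⁻¹' Set.Ici t ∩ P).ncard : ℝ) / P.ncard := by
    intro t
    unfold Tf unifP
    rw [hIcc]
    field_simp
  have hFf : ∀ t, Ff f P t = ((f ⁻¹' Set.Ici t ∩ Pᶜ).ncard : ℝ) / Pᶜ.ncard := by
    intro t
    unfold Ff unifP
    rw [hIcc]
    field_simp
  -- decomposition Ici = Ioi ⊔ {τ}
  have hsplit : ∀ (τ : ℝ) (S : Set Ω),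
      ((f ⁻¹' Set.Ici τ ∩ S).ncard : ℝ)
        = (f ⁻¹' Set.Ioi τ ∩ S).ncard + (f ⁻¹' {τ} ∩ S).ncard := by
    intro τ S
    have hdisj : Disjoint (f ⁻¹' Set.Ioi τ ∩ S) (f ⁻¹' {τ} ∩ S) := by
      rw [Set.disjoint_left]
      rintro ω ⟨h1, _⟩ ⟨h2, _⟩
      simp only [Set.mem_preimage, Set.mem_Ioi] at h1
      simp only [Set.mem_preimage, Set.mem_singleton_iff] at h2
      exact absurd h2 (ne_of_gt h1)
    have hun : f ⁻¹' Set.Ici τ ∩ S = (f ⁻¹' Set.Ioi τ ∩ S) ∪ (f ⁻¹' {τ} ∩ S) := by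
      ext ω
      simp only [Set.mem_inter_iff, Set.mem_preimage, Set.mem_Ici, Set.mem_Ioi,
        Set.mem_union, Set.mem_singleton_iff]
      constructor
      · rintro ⟨h1, h2⟩
        rcases lt_or_eq_of_le h1 with h | h
        · exact Or.inl ⟨h, h2⟩
        · exact Or.inr ⟨h.symm, h2⟩
      · rintro (⟨h1, h2⟩ | ⟨h1, h2⟩)
        · exact ⟨le_of_lt h1, h2⟩
        · exact ⟨le_of_eq h1.symm, h2⟩
    rw [hun, Set.ncard_union_eq hdisj (Set.toFinite _) (Set.toFinite _)]
    push_cast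
    ring
  -- limits of Tf
  have hrT : ∀ τ, Function.rightLim (Tf f P) τ
      = ((f ⁻¹' Set.Ioi τ ∩ P).ncard : ℝ) / P.ncard := by
    intro τ
    obtain ⟨δ, hδ, hR, _⟩ := gap_lemma f τ
    refine rightLim_eq_const hδ (fun u h1 h2 => ?_)
    rw [hTf]
    congr 3
    ext ω
    simp only [Set.mem_inter_iff, Set.mem_preimage, Set.mem_Ici, Set.mem_Ioi]
    rw [hR u h1 h2 ω]
  have hlT : ∀ τ, Function.leftLim (Tf f P) τ
      = ((f ⁻¹' Set.Ici τ ∩ P).ncard : ℝ) / P.ncard := by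
    intro τ
    obtain ⟨δ, hδ, _, hL⟩ := gap_lemma f τ
    refine leftLim_eq_const hδ (fun u h1 h2 => ?_)
    rw [hTf]
    congr 3
    ext ω
    simp only [Set.mem_inter_iff, Set.mem_preimage, Set.mem_Ici]
    constructor
    · rintro ⟨h3, h4⟩
      rcases lt_or_eq_of_le h3 with h5 | h5
      · exact ⟨(hL u h1 h2 ω).mp h5, h4⟩
      · set u' := (τ - δ + u) / 2 with hu'
        have h6 : τ - δ < u' := by rw [hu']; linarith
        have h7 : u' < u := by rw [hu']; linarith
        exact ⟨(hL u' h6 (h7.trans h2) ω).mp (by linarith), h4⟩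
    · rintro ⟨h3, h4⟩
      exact ⟨le_of_lt ((hL u h1 h2 ω).mpr h3), h4⟩
  -- the stieltjes function
  set s := (negFf_mono f P).stieltjesFunction with hs_def
  have hs : ∀ t, s t = -(((f ⁻¹' Set.Ioi t ∩ Pᶜ).ncard : ℝ) / Pᶜ.ncard) := by
    intro t
    rw [hs_def, Monotone.stieltjesFunction_eq]
    obtain ⟨δ, hδ, hR, _⟩ := gap_lemma f t
    refine rightLim_eq_const hδ (fun u h1 h2 => ?_)
    simp only [neg_inj]
    rw [hFf]
    congr 3
    ext ω
    simp only [Set.mem_inter_iff, Set.mem_preimage, Set.mem_Ici, Set.mem_Ioi]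
    rw [hR u h1 h2 ω]
  have hls : ∀ τ, Function.leftLim s τ
      = -(((f ⁻¹' Set.Ici τ ∩ Pᶜ).ncard : ℝ) / Pᶜ.ncard) := by
    intro τ
    obtain ⟨δ, hδ, _, hL⟩ := gap_lemma f τ
    refine leftLim_eq_const hδ (fun u h1 h2 => ?_)
    rw [hs]
    simp only [neg_inj]
    congr 3
    ext ω
    simp only [Set.mem_inter_iff, Set.mem_preimage, Set.mem_Ici, Set.mem_Ioi]
    rw [hL u h1 h2 ω]
  
  -- atoms of the measure
  have hsingle : ∀ τ : ℝ, dnegF f P {τ}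
      = ENNReal.ofReal (((f ⁻¹' {τ} ∩ Pᶜ).ncard : ℝ) / Pᶜ.ncard) := by
    intro τ
    have h0 : dnegF f P {τ} = ENNReal.ofReal (s τ - Function.leftLim s τ) :=
      s.measure_singleton τ
    rw [h0, hs, hls]
    congr 1
    rw [hsplit τ Pᶜ]
    ring
  have hbot : Tendsto (⇑s) atBot (𝓝 (-1)) := by
    refine Filter.Tendsto.congr' ?_ tendsto_const_nhds
    filter_upwards [eventually_le_atBot (-1 : ℝ)] with t ht
    have hset : f ⁻¹' Set.Ioi t ∩ Pᶜ = Pᶜ := by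
      ext ω
      simp only [Set.mem_inter_iff, Set.mem_preimage, Set.mem_Ioi, and_iff_right_iff_imp]
      intro _
      have := (hf ω).1
      linarith
    rw [hs, hset, div_self hq']
  have htop : Tendsto (⇑s) atTop (𝓝 0) := by
    refine Filter.Tendsto.congr' ?_ tendsto_const_nhds
    filter_upwards [eventually_ge_atTop (2 : ℝ)] with t ht
    have hset : f ⁻¹' Set.Ioi t ∩ Pᶜ = ∅ := by
      ext ω
      simp only [Set.mem_inter_iff, Set.mem_preimage, Set.mem_Ioi, Set.mem_empty_iff_false,
        iff_false, not_and]
      intro h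
      have := (hf ω).2
      linarith
    rw [hs, hset]
    simp
  have huniv : dnegF f P Set.univ = 1 := by
    have : dnegF f P Set.univ = ENNReal.ofReal (0 - (-1)) := s.measure_univ hbot htop
    rw [this]
    norm_num
  have hfinmeas : IsFiniteMeasure (dnegF f P) := ⟨by rw [huniv]; exact ENNReal.one_lt_top⟩
  set T : Finset ℝ := (Pᶜ.toFinite.toFinset).image f with hT_def
  have hmemT : ∀ τ, τ ∈ T ↔ τ ∈ f '' Pᶜ := by
    intro τ
    simp [hT_def, Finset.mem_image, Set.Finite.mem_toFinset, Set.mem_image]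
  have hsum_q : ∑ τ ∈ T, (f ⁻¹' {τ} ∩ Pᶜ).ncard = Pᶜ.ncard := by
    have h1 : ∀ τ, (f ⁻¹' {τ} ∩ Pᶜ).ncard
        = ((Pᶜ.toFinite.toFinset).filter fun ω => f ω = τ).card := by
      intro τ
      rw [← Set.ncard_coe_finset]
      congr 1
      ext ω
      simp only [Set.mem_inter_iff, Set.mem_preimage, Set.mem_singleton_iff,
        Finset.coe_filter, Set.Finite.mem_toFinset, Set.mem_setOf_eq]
      tauto
    simp_rw [h1]
    rw [← Finset.card_eq_sum_card_fiberwise (fun x hx => Finset.mem_image_of_mem f hx)]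
    exact (Set.ncard_eq_toFinset_card _ _).symm
  have hT1 : dnegF f P ↑T = 1 := by
    have hU : (↑T : Set ℝ) = ⋃ τ ∈ T, ({τ} : Set ℝ) := by
      ext x; simp
    rw [hU, measure_biUnion_finset ?_ (fun i _ => measurableSet_singleton i)]
    · have : ∀ τ ∈ T, dnegF f P {τ}
          = ENNReal.ofReal (((f ⁻¹' {τ} ∩ Pᶜ).ncard : ℝ) / Pᶜ.ncard) := fun τ _ => hsingle τ
      rw [Finset.sum_congr rfl this,
        ← ENNReal.ofReal_sum_of_nonneg (fun τ _ => by positivity)]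
      rw [← Finset.sum_div]
      have : (∑ τ ∈ T, ((f ⁻¹' {τ} ∩ Pᶜ).ncard : ℝ)) = (Pᶜ.ncard : ℝ) := by
        exact_mod_cast congrArg (Nat.cast : ℕ → ℝ) hsum_q
      rw [this, div_self hq']
      simp
    · intro a _ b _ hab
      simp [Function.onFun, Set.disjoint_singleton_left, hab]
  have hcompl : dnegF f P (↑T : Set ℝ)ᶜ = 0 := by
    rw [measure_compl T.measurableSet (by rw [hT1]; exact ENNReal.one_ne_top), huniv, hT1,
      tsub_self]
  have hmem : ∀ᵐ x ∂(dnegF f P), x ∈ (↑T : Set ℝ) := by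
    rw [ae_iff]
    exact hcompl
  have hTfb_eq : ∀ τ, Tfb f P τ
      = (((f ⁻¹' Set.Ioi τ ∩ P).ncard : ℝ) / P.ncard
        + ((f ⁻¹' Set.Ici τ ∩ P).ncard : ℝ) / P.ncard) / 2 := by
    intro τ
    rw [Tfb, hrT, hlT]
  have hanti : Antitone (Tfb f P) := by
    intro a b hab
    rw [hTfb_eq, hTfb_eq]
    have h1 : ((f ⁻¹' Set.Ioi b ∩ P).ncard : ℝ) ≤ (f ⁻¹' Set.Ioi a ∩ P).ncard := by
      exact_mod_cast Set.ncard_le_ncard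
        (Set.inter_subset_inter_left _ (Set.preimage_mono (Set.Ioi_subset_Ioi hab)))
        (Set.toFinite _)
    have h2 : ((f ⁻¹' Set.Ici b ∩ P).ncard : ℝ) ≤ (f ⁻¹' Set.Ici a ∩ P).ncard := by
      exact_mod_cast Set.ncard_le_ncard
        (Set.inter_subset_inter_left _ (Set.preimage_mono (Set.Ici_subset_Ici.mpr hab)))
        (Set.toFinite _)
    have h3 : (0:ℝ) ≤ (f ⁻¹' Set.Ioi b ∩ P).ncard := by positivity
    have h4 : (0:ℝ) ≤ (f ⁻¹' Set.Ici b ∩ P).ncard := by positivity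
    gcongr
  have hbound : ∀ x, ‖Tfb f P x‖ ≤ 1 := by
    intro x
    rw [Real.norm_eq_abs, abs_le, hTfb_eq]
    have h1 : ((f ⁻¹' Set.Ioi x ∩ P).ncard : ℝ) ≤ P.ncard := by
      exact_mod_cast Set.ncard_le_ncard Set.inter_subset_right P.toFinite
    have h2 : ((f ⁻¹' Set.Ici x ∩ P).ncard : ℝ) ≤ P.ncard := by
      exact_mod_cast Set.ncard_le_ncard Set.inter_subset_right P.toFinite
    have h3 : (0:ℝ) ≤ (f ⁻¹' Set.Ioi x ∩ P).ncard := by positivity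
    have h4 : (0:ℝ) ≤ (f ⁻¹' Set.Ici x ∩ P).ncard := by positivity
    have h5 : ((f ⁻¹' Set.Ioi x ∩ P).ncard : ℝ) / P.ncard ≤ 1 := by
      rw [div_le_one hp]; exact h1
    have h6 : ((f ⁻¹' Set.Ici x ∩ P).ncard : ℝ) / P.ncard ≤ 1 := by
      rw [div_le_one hp]; exact h2
    have h7 : (0:ℝ) ≤ ((f ⁻¹' Set.Ioi x ∩ P).ncard : ℝ) / P.ncard := by positivity
    have h8 : (0:ℝ) ≤ ((f ⁻¹' Set.Ici x ∩ P).ncard : ℝ) / P.ncard := by positivity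
    constructor <;> linarith
  have hint : Integrable (Tfb f P) (dnegF f P) :=
    Integrable.mono' (integrable_const 1) hanti.measurable.aestronglyMeasurable
      (ae_of_all _ hbound)
  have hI : ∫ x, Tfb f P x ∂(dnegF f P)
      = ∑ τ ∈ T, (((f ⁻¹' {τ} ∩ Pᶜ).ncard : ℝ) / Pᶜ.ncard) * Tfb f P τ := by
    rw [← Measure.restrict_eq_self_of_ae_mem hmem]
    rw [integral_finset T hint.integrableOn]
    refine Finset.sum_congr rfl fun τ _ => ?_
    rw [Measure.real, hsingle, ENNReal.toReal_ofReal (by positivity), smul_eq_mul]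
  
  -- counting the separating pairs
  have heqq : ∀ τ, ((Pᶜ.toFinite.toFinset).filter fun ω => f ω = τ).card
      = (f ⁻¹' {τ} ∩ Pᶜ).ncard := by
    intro τ
    rw [← Set.ncard_coe_finset]
    congr 1
    ext ω
    simp only [Finset.coe_filter, Set.Finite.mem_toFinset, Set.mem_setOf_eq,
      Set.mem_inter_iff, Set.mem_preimage, Set.mem_singleton_iff]
    tauto
  have hC : ({p : Ω × Ω | f p.1 > f p.2} ∩ P ×ˢ Pᶜ).ncard
      = ∑ τ ∈ T, (f ⁻¹' Set.Ioi τ ∩ P).ncard * (f ⁻¹' {τ} ∩ Pᶜ).ncard := by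
    have hset : {p : Ω × Ω | f p.1 > f p.2} ∩ P ×ˢ Pᶜ
        = ↑((P.toFinite.toFinset ×ˢ Pᶜ.toFinite.toFinset).filter fun z => f z.2 < f z.1) := by
      ext z
      simp only [Set.mem_inter_iff, Set.mem_setOf_eq, Set.mem_prod, Finset.coe_filter,
        Finset.mem_product, Set.Finite.mem_toFinset, gt_iff_lt]
      tauto
    rw [hset, Set.ncard_coe_finset, Finset.card_filter, Finset.sum_product, Finset.sum_comm]
    have hstep : ∀ b ∈ Pᶜ.toFinite.toFinset,
        (∑ a ∈ P.toFinite.toFinset, if f b < f a then 1 else 0)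
        = (fun τ => (f ⁻¹' Set.Ioi τ ∩ P).ncard) (f b) := by
      intro b _
      rw [← Finset.card_filter, ← Set.ncard_coe_finset]
      congr 1
      ext ω
      simp only [Finset.coe_filter, Set.Finite.mem_toFinset, Set.mem_setOf_eq,
        Set.mem_inter_iff, Set.mem_preimage, Set.mem_Ioi]
      tauto
    rw [Finset.sum_congr rfl hstep,
      ← Finset.sum_fiberwise_of_maps_to' (fun b hb => Finset.mem_image_of_mem f hb)
        (fun τ => (f ⁻¹' Set.Ioi τ ∩ P).ncard)]
    refine Finset.sum_congr rfl fun τ _ => ?_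
    rw [Finset.sum_const, smul_eq_mul, heqq]
    ring
  have hPr : unifP ({p : Ω × Ω | f p.1 > f p.2} ∩ P ×ˢ Pᶜ) / (unifP P * unifP Pᶜ)
      = (∑ τ ∈ T, ((f ⁻¹' Set.Ioi τ ∩ P).ncard : ℝ) * ((f ⁻¹' {τ} ∩ Pᶜ).ncard : ℝ))
        / ((P.ncard : ℝ) * (Pᶜ.ncard : ℝ)) := by
    simp only [unifP]
    rw [hC, Fintype.card_prod]
    push_cast
    field_simp
  -- the set of shared scores
  set T' : Finset ℝ :=
    (Set.Finite.inter_of_left ((Set.toFinite P).image f) (f '' Pᶜ)).toFinset with hT'_def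
  have hsub : T' ⊆ T := by
    intro τ hτ
    rw [hT'_def, Set.Finite.mem_toFinset] at hτ
    exact (hmemT τ).mpr hτ.2
  have hzero : ∀ τ ∈ T, τ ∉ T' → (f ⁻¹' {τ} ∩ P).ncard = 0 := by
    intro τ hτT hτ
    rw [hT'_def, Set.Finite.mem_toFinset] at hτ
    have hτq : τ ∈ f '' Pᶜ := (hmemT τ).mp hτT
    have hnp : τ ∉ f '' P := fun hmem => hτ ⟨hmem, hτq⟩
    have : f ⁻¹' {τ} ∩ P = ∅ := by
      ext ω
      simp only [Set.mem_inter_iff, Set.mem_preimage, Set.mem_singleton_iff,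
        Set.mem_empty_iff_false, iff_false, not_and]
      intro hfω hωP
      exact hnp ⟨ω, hωP, hfω⟩
    rw [this, Set.ncard_empty]
  have hRHS : ∑ τ ∈ T', (unifP (f ⁻¹' {τ} ∩ P) / unifP P) * (unifP (f ⁻¹' {τ} ∩ Pᶜ) / unifP Pᶜ)
      = ∑ τ ∈ T, (((f ⁻¹' {τ} ∩ P).ncard : ℝ) * ((f ⁻¹' {τ} ∩ Pᶜ).ncard : ℝ))
        / ((P.ncard : ℝ) * (Pᶜ.ncard : ℝ)) := by
    rw [Finset.sum_congr rfl (fun τ _ => ?_)]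
    · exact Finset.sum_subset hsub (fun τ _ hτ => by rw [hzero τ ‹_› hτ]; simp)
    · simp only [unifP]
      field_simp
  rw [hI, hPr, hRHS, Finset.sum_div, ← Finset.sum_sub_distrib, Finset.mul_sum]
  refine Finset.sum_congr rfl fun τ _ => ?_
  rw [hTfb_eq, hsplit τ P]
  field_simp
  ring
end

section
/- With A the AUC and Pr the separation probability, 0 ≤ A − Pr ≤ (1/4)(μ(B|P) + μ(B|P^c)), where B = f^{-1}(f(P) ∩ f(P^c)). -/
open MeasureTheory Set

/-! ### Auxiliary counting machinery -/

open scoped Classical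

section CntR
variable {Ω : Type*} [Fintype Ω]

open Classical in
/-- The number of elements satisfying a predicate, as a real number. -/
noncomputable def cntR {Ω : Type*} [Fintype Ω] (p : Ω → Prop) : ℝ :=
  ((Finset.univ.filter p).card : ℝ)

lemma cntR_eq_sum (p : Ω → Prop) :
    cntR p = ∑ ω : Ω, (if p ω then (1:ℝ) else 0) := by
  classical
  rw [cntR, Finset.filter_congr_decidable, Finset.card_filter]
  push_cast
  exact Finset.sum_congr rfl fun ω _ => by split <;> simp

lemma cntR_nonneg (p : Ω → Prop) : 0 ≤ cntR p := by
  rw [cntR_eq_sum]; exact Finset.sum_nonneg fun ω _ => by split <;> norm_num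

lemma cntR_congr {p q : Ω → Prop} (h : ∀ ω, p ω ↔ q ω) : cntR p = cntR q := by
  rw [cntR_eq_sum, cntR_eq_sum]
  exact Finset.sum_congr rfl fun ω _ => by rw [h ω]

lemma cntR_mono {p q : Ω → Prop} (h : ∀ ω, p ω → q ω) : cntR p ≤ cntR q := by
  rw [cntR_eq_sum, cntR_eq_sum]
  refine Finset.sum_le_sum fun ω _ => ?_
  by_cases hp : p ω
  · simp [hp, h ω hp]
  · simp only [hp, if_false]
    split <;> norm_num

lemma cntR_false : cntR (fun _ : Ω => False) = 0 := by
  rw [cntR_eq_sum]; simp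

lemma cntR_split (p q : Ω → Prop) :
    cntR p = cntR (fun ω => p ω ∧ q ω) + cntR (fun ω => p ω ∧ ¬ q ω) := by
  classical
  rw [cntR_eq_sum, cntR_eq_sum, cntR_eq_sum, ← Finset.sum_add_distrib]
  refine Finset.sum_congr rfl fun ω _ => ?_
  by_cases hp : p ω <;> by_cases hq : q ω <;> simp [hp, hq]

lemma cntR_pos {p : Ω → Prop} (h : ∃ ω, p ω) : 0 < cntR p := by
  classical
  obtain ⟨ω, hω⟩ := h
  rw [cntR]
  have h1 : ω ∈ Finset.univ.filter p := by simp [hω]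
  have h2 := Finset.card_pos.2 ⟨ω, h1⟩
  exact_mod_cast h2

lemma cntR_fiber (f : Ω → ℝ) (p : Ω → Prop) (V : Finset ℝ) (hV : ∀ ω, p ω → f ω ∈ V) :
    cntR p = ∑ v ∈ V, cntR (fun ω => f ω = v ∧ p ω) := by
  classical
  simp only [cntR_eq_sum]
  rw [Finset.sum_comm]
  refine Finset.sum_congr rfl fun ω _ => ?_
  by_cases hp : p ω
  · simp only [hp, and_true]
    rw [Finset.sum_ite_eq V (f ω) (fun _ => (1:ℝ))]
    simp [hV ω hp]
  · simp [hp]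

lemma ncard_eq_cntR (p : Ω → Prop) : (({ω | p ω} : Set Ω).ncard : ℝ) = cntR p := by
  classical
  rw [cntR, Set.ncard_eq_toFinset_card', Set.toFinset_setOf, Finset.filter_congr_decidable]

lemma unifP_eq (p : Ω → Prop) : unifP {ω | p ω} = cntR p / (Fintype.card Ω) := by
  rw [unifP, ncard_eq_cntR]

lemma unifP_div_unifP [Nonempty Ω] (p q : Ω → Prop) :
    unifP {ω | p ω} / unifP {ω | q ω} = cntR p / cntR q := by
  have hN : (0:ℝ) < Fintype.card Ω := by
    have := Fintype.card_pos (α := Ω); exact_mod_cast this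
  rw [unifP_eq, unifP_eq, div_div_div_comm, div_self hN.ne', div_one]

end CntR

section Limits
variable {Ω : Type*} [Fintype Ω]

lemma rightLim_eq_const_of {g : ℝ → ℝ} {v c w : ℝ} (hvw : v < w)
    (h : ∀ t, v < t → t < w → g t = c) : Function.rightLim g v = c := by
  apply rightLim_eq_of_tendsto
  apply Filter.Tendsto.congr' _ (tendsto_const_nhds (x := c))
  filter_upwards [Ioo_mem_nhdsGT_of_mem ⟨le_refl v, hvw⟩] with t ht
  exact (h t ht.1 ht.2).symm

lemma leftLim_eq_const_of {g : ℝ → ℝ} {u v c : ℝ} (huv : u < v)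
    (h : ∀ t, u < t → t < v → g t = c) : Function.leftLim g v = c := by
  apply leftLim_eq_of_tendsto
  apply Filter.Tendsto.congr' _ (tendsto_const_nhds (x := c))
  filter_upwards [Ioo_mem_nhdsLT_of_mem ⟨huv, le_refl v⟩] with t ht
  exact (h t ht.1 ht.2).symm

lemma exists_gap_right (f : Ω → ℝ) (v : ℝ) : ∃ w, v < w ∧ ∀ ω, v < f ω → w ≤ f ω := by
  classical
  by_cases h : ((Finset.univ.image f).filter (v < ·)).Nonempty
  · refine ⟨((Finset.univ.image f).filter (v < ·)).min' h, ?_, fun ω hω => ?_⟩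
    · have hm := Finset.min'_mem _ h
      exact (Finset.mem_filter.1 hm).2
    · exact Finset.min'_le _ _ (Finset.mem_filter.2
        ⟨Finset.mem_image_of_mem f (Finset.mem_univ ω), hω⟩)
  · refine ⟨v + 1, by linarith, fun ω hω => ?_⟩
    exfalso
    exact h ⟨f ω, Finset.mem_filter.2 ⟨Finset.mem_image_of_mem f (Finset.mem_univ ω), hω⟩⟩

lemma exists_gap_left (f : Ω → ℝ) (v : ℝ) : ∃ u, u < v ∧ ∀ ω, f ω < v → f ω ≤ u := by
  classical
  by_cases h : ((Finset.univ.image f).filter (· < v)).Nonempty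
  · refine ⟨((Finset.univ.image f).filter (· < v)).max' h, ?_, fun ω hω => ?_⟩
    · have hm := Finset.max'_mem _ h
      exact (Finset.mem_filter.1 hm).2
    · exact Finset.le_max' ((Finset.univ.image f).filter (· < v)) (f ω) (Finset.mem_filter.2
        ⟨Finset.mem_image_of_mem f (Finset.mem_univ ω), hω⟩)
  · refine ⟨v - 1, by linarith, fun ω hω => ?_⟩
    exfalso
    exact h ⟨f ω, Finset.mem_filter.2 ⟨Finset.mem_image_of_mem f (Finset.mem_univ ω), hω⟩⟩

lemma Tf_eq [Nonempty Ω] (f : Ω → ℝ) (P : Set Ω) (hf : ∀ ω, f ω ≤ 1) (t : ℝ) :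
    Tf f P t = cntR (fun ω => t ≤ f ω ∧ ω ∈ P) / cntR (· ∈ P) := by
  have h1 : f ⁻¹' Set.Icc t 1 ∩ P = {ω | t ≤ f ω ∧ ω ∈ P} := by
    ext ω; simp [Set.mem_Icc, hf ω, and_assoc]
  rw [Tf, h1]
  exact unifP_div_unifP _ _

lemma Ff_eq [Nonempty Ω] (f : Ω → ℝ) (P : Set Ω) (hf : ∀ ω, f ω ≤ 1) (t : ℝ) :
    Ff f P t = cntR (fun ω => t ≤ f ω ∧ ω ∈ Pᶜ) / cntR (· ∈ Pᶜ) := by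
  have h1 : f ⁻¹' Set.Icc t 1 ∩ Pᶜ = {ω | t ≤ f ω ∧ ω ∈ Pᶜ} := by
    ext ω; simp [Set.mem_Icc, hf ω, and_assoc]
  rw [Ff, h1]
  exact unifP_div_unifP _ _

lemma Tfb_eq_s10 [Nonempty Ω] (f : Ω → ℝ) (P : Set Ω) (hf : ∀ ω, f ω ≤ 1) (v : ℝ) :
    Tfb f P v = (cntR (fun ω => v < f ω ∧ ω ∈ P) + cntR (fun ω => v ≤ f ω ∧ ω ∈ P))
      / (2 * cntR (· ∈ P)) := by
  have hT : Tf f P = fun t => cntR (fun ω => t ≤ f ω ∧ ω ∈ P) / cntR (· ∈ P) :=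
    funext fun t => Tf_eq f P hf t
  obtain ⟨w, hvw, hw⟩ := exists_gap_right f v
  obtain ⟨u, huv, hu⟩ := exists_gap_left f v
  have hR : Function.rightLim (Tf f P) v
      = cntR (fun ω => v < f ω ∧ ω ∈ P) / cntR (· ∈ P) := by
    rw [hT]
    refine rightLim_eq_const_of hvw fun t ht1 ht2 => ?_
    congr 1
    refine cntR_congr fun ω => ⟨fun hh => ⟨lt_of_lt_of_le ht1 hh.1, hh.2⟩,
      fun hh => ⟨le_trans (le_of_lt ht2) (hw ω hh.1), hh.2⟩⟩
  have hL : Function.leftLim (Tf f P) v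
      = cntR (fun ω => v ≤ f ω ∧ ω ∈ P) / cntR (· ∈ P) := by
    rw [hT]
    refine leftLim_eq_const_of huv fun t ht1 ht2 => ?_
    congr 1
    refine cntR_congr fun ω => ⟨fun hh => ⟨?_, hh.2⟩, fun hh => ⟨le_trans (le_of_lt ht2) hh.1, hh.2⟩⟩
    by_contra hlt
    exact absurd (le_trans hh.1 (hu ω (lt_of_not_ge hlt))) (not_le.2 ht1)
  rw [Tfb, hR, hL, ← add_div, div_div, mul_comm]

lemma stieltjesNegFf_eq [Nonempty Ω] (f : Ω → ℝ) (P : Set Ω) (hf : ∀ ω, f ω ≤ 1) (t : ℝ) :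
    (negFf_mono f P).stieltjesFunction t
      = -(cntR (fun ω => t < f ω ∧ ω ∈ Pᶜ) / cntR (· ∈ Pᶜ)) := by
  rw [Monotone.stieltjesFunction_eq]
  have hF : (fun s => -(Ff f P s))
      = fun s => -(cntR (fun ω => s ≤ f ω ∧ ω ∈ Pᶜ) / cntR (· ∈ Pᶜ)) :=
    funext fun s => by rw [Ff_eq f P hf]
  rw [hF]
  obtain ⟨w, hvw, hw⟩ := exists_gap_right f t
  refine rightLim_eq_const_of hvw fun s hs1 hs2 => ?_
  congr 2
  refine cntR_congr fun ω => ⟨fun hh => ⟨lt_of_lt_of_le hs1 hh.1, hh.2⟩,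
    fun hh => ⟨le_trans (le_of_lt hs2) (hw ω hh.1), hh.2⟩⟩

end Limits

section MeasureId
variable {Ω : Type*} [Fintype Ω]

open Classical in
/-- The finite set of values taken by `f` on `Pᶜ`. -/
noncomputable def Vals (f : Ω → ℝ) (P : Set Ω) : Finset ℝ :=
  (Finset.univ.filter (· ∈ Pᶜ)).image f

lemma mem_Vals {f : Ω → ℝ} {P : Set Ω} {v : ℝ} :
    v ∈ Vals f P ↔ ∃ ω, ω ∈ Pᶜ ∧ f ω = v := by
  classical
  constructor
  · intro hv
    obtain ⟨ω, hω, rfl⟩ := Finset.mem_image.1 hv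
    exact ⟨ω, (Finset.mem_filter.1 hω).2, rfl⟩
  · rintro ⟨ω, hω, rfl⟩
    exact Finset.mem_image.2 ⟨ω, Finset.mem_filter.2 ⟨Finset.mem_univ ω, hω⟩, rfl⟩

lemma mem_Vals_of {f : Ω → ℝ} {P : Set Ω} {ω : Ω} (hω : ω ∈ Pᶜ) : f ω ∈ Vals f P :=
  mem_Vals.2 ⟨ω, hω, rfl⟩

lemma dnegF_eq_s10 [Nonempty Ω] (f : Ω → ℝ) (P : Set Ω) (hf : ∀ ω, f ω ≤ 1) :
    dnegF f P = ∑ v ∈ Vals f P,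
      (ENNReal.ofReal (cntR (fun ω => f ω = v ∧ ω ∈ Pᶜ) / cntR (· ∈ Pᶜ))) • Measure.dirac v := by
  rw [dnegF]
  refine Measure.ext_of_Ioc _ _ fun a b hab => ?_
  rw [StieltjesFunction.measure_Ioc, stieltjesNegFf_eq f P hf, stieltjesNegFf_eq f P hf]
  have hsplit : cntR (fun ω => a < f ω ∧ ω ∈ Pᶜ)
      = cntR (fun ω => (a < f ω ∧ ω ∈ Pᶜ) ∧ f ω ≤ b)
        + cntR (fun ω => (a < f ω ∧ ω ∈ Pᶜ) ∧ ¬ f ω ≤ b) :=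
    cntR_split _ _
  have h2 : cntR (fun ω => (a < f ω ∧ ω ∈ Pᶜ) ∧ ¬ f ω ≤ b) = cntR (fun ω => b < f ω ∧ ω ∈ Pᶜ) :=
    cntR_congr fun ω => ⟨fun hh => ⟨not_le.1 hh.2, hh.1.2⟩,
      fun hh => ⟨⟨lt_trans hab hh.1, hh.2⟩, not_le.2 hh.1⟩⟩
  have hfib : cntR (fun ω => (a < f ω ∧ ω ∈ Pᶜ) ∧ f ω ≤ b)
      = ∑ v ∈ Vals f P, cntR (fun ω => f ω = v ∧ (a < f ω ∧ ω ∈ Pᶜ) ∧ f ω ≤ b) :=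
    cntR_fiber f _ _ (fun ω hω => mem_Vals_of hω.1.2)
  have hterm : ∀ v ∈ Vals f P, cntR (fun ω => f ω = v ∧ (a < f ω ∧ ω ∈ Pᶜ) ∧ f ω ≤ b)
      = if v ∈ Set.Ioc a b then cntR (fun ω => f ω = v ∧ ω ∈ Pᶜ) else 0 := by
    intro v _
    by_cases hv : v ∈ Set.Ioc a b
    · rw [if_pos hv]
      refine cntR_congr fun ω => ⟨fun hh => ⟨hh.1, hh.2.1.2⟩, fun hh => ?_⟩
      refine ⟨hh.1, ⟨?_, hh.2⟩, ?_⟩ <;> rw [hh.1]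
      · exact hv.1
      · exact hv.2
    · rw [if_neg hv]
      rw [← cntR_false (Ω := Ω)]
      refine cntR_congr fun ω => ⟨fun hh => hv ⟨?_, ?_⟩, fun hh => absurd hh not_false⟩
      · rw [← hh.1]; exact hh.2.1.1
      · rw [← hh.1]; exact hh.2.2
  -- LHS
  have hLHS : ENNReal.ofReal (-(cntR (fun ω => b < f ω ∧ ω ∈ Pᶜ) / cntR (· ∈ Pᶜ))
        - -(cntR (fun ω => a < f ω ∧ ω ∈ Pᶜ) / cntR (· ∈ Pᶜ)))
      = ENNReal.ofReal (∑ v ∈ Vals f P,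
          (if v ∈ Set.Ioc a b then cntR (fun ω => f ω = v ∧ ω ∈ Pᶜ) else 0) / cntR (· ∈ Pᶜ)) := by
    congr 1
    rw [← Finset.sum_div]
    rw [← Finset.sum_congr rfl hterm, ← hfib]
    rw [hsplit, h2]
    ring
  rw [hLHS]
  -- RHS
  rw [Measure.coe_finset_sum, Finset.sum_apply]
  rw [ENNReal.ofReal_sum_of_nonneg]
  · refine Finset.sum_congr rfl fun v hv => ?_
    rw [Measure.smul_apply, Measure.dirac_apply, smul_eq_mul]
    by_cases hvI : v ∈ Set.Ioc a b
    · rw [Set.indicator_of_mem hvI, if_pos hvI, Pi.one_apply, mul_one]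
    · rw [Set.indicator_of_notMem hvI, if_neg hvI, mul_zero]
      simp
  · intro v _
    split
    · exact div_nonneg (cntR_nonneg _) (cntR_nonneg _)
    · simp

lemma measurable_Tfb [Nonempty Ω] (f : Ω → ℝ) (P : Set Ω) (hf : ∀ ω, f ω ≤ 1) :
    Measurable (Tfb f P) := by
  have hT : Tfb f P = fun v => (cntR (fun ω => v < f ω ∧ ω ∈ P)
      + cntR (fun ω => v ≤ f ω ∧ ω ∈ P)) / (2 * cntR (· ∈ P)) :=
    funext fun v => Tfb_eq_s10 f P hf v
  have hanti : Antitone (fun v => cntR (fun ω => v < f ω ∧ ω ∈ P)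
      + cntR (fun ω => v ≤ f ω ∧ ω ∈ P)) := by
    intro s t hst
    exact add_le_add
      (cntR_mono fun ω hh => ⟨lt_of_le_of_lt hst hh.1, hh.2⟩)
      (cntR_mono fun ω hh => ⟨le_trans hst hh.1, hh.2⟩)
  rw [hT]; exact hanti.measurable.div_const _

lemma integral_Tfb_eq [Nonempty Ω] (f : Ω → ℝ) (P : Set Ω) (hf : ∀ ω, f ω ≤ 1) :
    ∫ x, Tfb f P x ∂(dnegF f P)
      = ∑ v ∈ Vals f P,
          (cntR (fun ω => f ω = v ∧ ω ∈ Pᶜ) / cntR (· ∈ Pᶜ)) * Tfb f P v := by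
  have hmeas := measurable_Tfb f P hf
  rw [dnegF_eq_s10 f P hf]
  rw [integral_finset_sum_measure (by
    intro v hv
    refine Integrable.smul_measure ⟨hmeas.aestronglyMeasurable, ?_⟩ ENNReal.ofReal_ne_top
    show (∫⁻ a, ‖Tfb f P a‖₊ ∂(Measure.dirac v)) < ⊤
    rw [lintegral_dirac]
    exact ENNReal.coe_lt_top)]
  refine Finset.sum_congr rfl fun v hv => ?_
  rw [integral_smul_measure, integral_dirac, smul_eq_mul,
    ENNReal.toReal_ofReal (div_nonneg (cntR_nonneg _) (cntR_nonneg _))]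

lemma pr_eq [Nonempty Ω] (f : Ω → ℝ) (P : Set Ω) :
    unifP ({p : Ω × Ω | f p.1 > f p.2} ∩ P ×ˢ Pᶜ) / (unifP P * unifP Pᶜ)
      = (∑ v ∈ Vals f P, cntR (fun ω => f ω = v ∧ ω ∈ Pᶜ)
            * cntR (fun ω => v < f ω ∧ ω ∈ P))
          / (cntR (fun ω : Ω => ω ∈ P) * cntR (fun ω : Ω => ω ∈ Pᶜ)) := by
  have hN : (0:ℝ) < Fintype.card Ω := by
    have := Fintype.card_pos (α := Ω); exact_mod_cast this
  have h1 : ({p : Ω × Ω | f p.1 > f p.2} ∩ P ×ˢ Pᶜ)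
      = {q : Ω × Ω | f q.2 < f q.1 ∧ q.1 ∈ P ∧ q.2 ∈ Pᶜ} := by
    ext q
    exact ⟨fun h => ⟨h.1, h.2.1, h.2.2⟩, fun h => ⟨h.1, h.2.1, h.2.2⟩⟩
  have hPP : unifP P = cntR (fun ω : Ω => ω ∈ P) / Fintype.card Ω := unifP_eq _
  have hPQ : unifP Pᶜ = cntR (fun ω : Ω => ω ∈ Pᶜ) / Fintype.card Ω := unifP_eq _
  rw [h1, unifP_eq (fun q : Ω × Ω => f q.2 < f q.1 ∧ q.1 ∈ P ∧ q.2 ∈ Pᶜ), hPP, hPQ]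
  rw [div_mul_div_comm, Fintype.card_prod]
  push_cast
  rw [div_div_div_comm, div_self (by positivity :
      ((Fintype.card Ω : ℝ) * Fintype.card Ω) ≠ 0), div_one]
  congr 1
  -- counting the pairs
  have hpair : cntR (fun q : Ω × Ω => f q.2 < f q.1 ∧ q.1 ∈ P ∧ q.2 ∈ Pᶜ)
      = ∑ ω₂ : Ω, (if ω₂ ∈ Pᶜ then (1:ℝ) else 0)
          * cntR (fun ω₁ => f ω₂ < f ω₁ ∧ ω₁ ∈ P) := by
    rw [cntR_eq_sum, Fintype.sum_prod_type_right]
    refine Finset.sum_congr rfl fun ω₂ _ => ?_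
    rw [cntR_eq_sum, Finset.mul_sum]
    refine Finset.sum_congr rfl fun ω₁ _ => ?_
    by_cases h2 : ω₂ ∈ Pᶜ <;> by_cases hlt : f ω₂ < f ω₁ <;> by_cases hp1 : ω₁ ∈ P <;>
      simp [h2, hlt, hp1]
  have hswap : ∀ ω₂ : Ω, (if ω₂ ∈ Pᶜ then (1:ℝ) else 0)
        * cntR (fun ω₁ => f ω₂ < f ω₁ ∧ ω₁ ∈ P)
      = ∑ v ∈ Vals f P, (if f ω₂ = v ∧ ω₂ ∈ Pᶜ then (1:ℝ) else 0)
          * cntR (fun ω₁ => v < f ω₁ ∧ ω₁ ∈ P) := by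
    intro ω₂
    by_cases h2 : ω₂ ∈ Pᶜ
    · simp only [h2, and_true, if_true, one_mul]
      have hterm : ∀ v ∈ Vals f P, (if f ω₂ = v then (1:ℝ) else 0)
            * cntR (fun ω₁ => v < f ω₁ ∧ ω₁ ∈ P)
          = if f ω₂ = v then cntR (fun ω₁ => f ω₂ < f ω₁ ∧ ω₁ ∈ P) else 0 := by
        intro v _
        by_cases hv : f ω₂ = v
        · subst hv; simp
        · simp [hv]
      rw [Finset.sum_congr rfl hterm,
        Finset.sum_ite_eq (Vals f P) (f ω₂) (fun _ => cntR (fun ω₁ => f ω₂ < f ω₁ ∧ ω₁ ∈ P)),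
        if_pos (mem_Vals_of h2)]
    · simp [h2]
  rw [hpair, Finset.sum_congr rfl fun ω₂ _ => hswap ω₂, Finset.sum_comm]
  refine Finset.sum_congr rfl fun v _ => ?_
  rw [← Finset.sum_mul, cntR_eq_sum (fun i => f i = v ∧ i ∈ Pᶜ)]
  congr 1
  exact Finset.sum_congr rfl fun ω _ => by by_cases h : f ω = v ∧ ω ∈ Pᶜ <;> simp [h]

lemma quarter_bound {p q cP cQ : ℝ} (hcP : 0 < cP) (hcQ : 0 < cQ) (hp : 0 ≤ p) (hq : 0 ≤ q)
    (hpl : p ≤ cP) (hql : q ≤ cQ) :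
    q * p / (2 * cP * cQ) ≤ 1 / 4 * (p / cP + q / cQ) := by
  rw [← sub_nonneg]
  have hkey : 1 / 4 * (p / cP + q / cQ) - q * p / (2 * cP * cQ)
      = (p * (cQ - q) + q * (cP - p)) / (4 * cP * cQ) := by
    field_simp
    ring
  rw [hkey]
  exact div_nonneg (add_nonneg (mul_nonneg hp (sub_nonneg.2 hql))
    (mul_nonneg hq (sub_nonneg.2 hpl))) (by positivity)

end MeasureId

theorem auc_sub_sep_prob_bound {Ω : Type*} [Fintype Ω] [Nonempty Ω] (f : Ω → ℝ) (P : Set Ω)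
    (hf : ∀ ω, f ω ∈ Set.Icc (0:ℝ) 1) (hP : P.Nonempty) (hPc : Pᶜ.Nonempty) :
    0 ≤ ∫ x, Tfb f P x ∂(dnegF f P) - (unifP ({p : Ω × Ω | f p.1 > f p.2} ∩ P ×ˢ Pᶜ) / (unifP P * unifP Pᶜ)) ∧
    ∫ x, Tfb f P x ∂(dnegF f P) - (unifP ({p : Ω × Ω | f p.1 > f p.2} ∩ P ×ˢ Pᶜ) / (unifP P * unifP Pᶜ))
      ≤ (1 / 4) * (unifP (f ⁻¹' (f '' P ∩ f '' Pᶜ) ∩ P) / unifP P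
          + unifP (f ⁻¹' (f '' P ∩ f '' Pᶜ) ∩ Pᶜ) / unifP Pᶜ) := by
  obtain ⟨ω0, hω0⟩ := hP
  obtain ⟨ω1, hω1⟩ := hPc
  have hf1 : ∀ ω, f ω ≤ 1 := fun ω => (hf ω).2
  have hcP : 0 < cntR (fun ω : Ω => ω ∈ P) := cntR_pos ⟨ω0, hω0⟩
  have hcQ : 0 < cntR (fun ω : Ω => ω ∈ Pᶜ) := cntR_pos ⟨ω1, hω1⟩
  have hdiff : ∫ x, Tfb f P x ∂(dnegF f P)
      - unifP ({p : Ω × Ω | f p.1 > f p.2} ∩ P ×ˢ Pᶜ) / (unifP P * unifP Pᶜ)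
      = ∑ v ∈ Vals f P, cntR (fun ω => f ω = v ∧ ω ∈ Pᶜ) * cntR (fun ω => f ω = v ∧ ω ∈ P)
          / (2 * cntR (fun ω : Ω => ω ∈ P) * cntR (fun ω : Ω => ω ∈ Pᶜ)) := by
    rw [integral_Tfb_eq f P hf1, pr_eq f P, Finset.sum_div, ← Finset.sum_sub_distrib]
    refine Finset.sum_congr rfl fun v hv => ?_
    rw [Tfb_eq_s10 f P hf1]
    have hbsplit : cntR (fun ω => v ≤ f ω ∧ ω ∈ P)
        = cntR (fun ω => v < f ω ∧ ω ∈ P) + cntR (fun ω => f ω = v ∧ ω ∈ P) := by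
      rw [cntR_split (fun ω => v ≤ f ω ∧ ω ∈ P) (fun ω => v < f ω)]
      congr 1
      · exact cntR_congr fun ω =>
          ⟨fun hh => ⟨hh.2, hh.1.2⟩, fun hh => ⟨⟨le_of_lt hh.1, hh.2⟩, hh.1⟩⟩
      · exact cntR_congr fun ω =>
          ⟨fun hh => ⟨le_antisymm (not_lt.1 hh.2) hh.1.1, hh.1.2⟩,
            fun hh => ⟨⟨le_of_eq hh.1.symm, hh.2⟩, by rw [hh.1]; exact lt_irrefl v⟩⟩
    rw [hbsplit]
    field_simp
    ring
  constructor
  · rw [hdiff]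
    refine Finset.sum_nonneg fun v _ => ?_
    exact div_nonneg (mul_nonneg (cntR_nonneg _) (cntR_nonneg _)) (by positivity)
  · rw [hdiff]
    -- rewrite the right-hand side
    have hsetP : f ⁻¹' (f '' P ∩ f '' Pᶜ) ∩ P = {ω | f ω ∈ f '' Pᶜ ∧ ω ∈ P} := by
      ext ω
      simp only [Set.mem_inter_iff, Set.mem_preimage, Set.mem_setOf_eq]
      exact ⟨fun hh => ⟨hh.1.2, hh.2⟩, fun hh => ⟨⟨Set.mem_image_of_mem f hh.2, hh.1⟩, hh.2⟩⟩
    have hsetQ : f ⁻¹' (f '' P ∩ f '' Pᶜ) ∩ Pᶜ = {ω | f ω ∈ f '' P ∧ ω ∈ Pᶜ} := by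
      ext ω
      simp only [Set.mem_inter_iff, Set.mem_preimage, Set.mem_setOf_eq]
      exact ⟨fun hh => ⟨hh.1.1, hh.2⟩, fun hh => ⟨⟨hh.1, Set.mem_image_of_mem f hh.2⟩, hh.2⟩⟩
    have hdivP : unifP {ω : Ω | f ω ∈ f '' Pᶜ ∧ ω ∈ P} / unifP P
        = cntR (fun ω => f ω ∈ f '' Pᶜ ∧ ω ∈ P) / cntR (fun ω : Ω => ω ∈ P) :=
      unifP_div_unifP _ _
    have hdivQ : unifP {ω : Ω | f ω ∈ f '' P ∧ ω ∈ Pᶜ} / unifP Pᶜ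
        = cntR (fun ω => f ω ∈ f '' P ∧ ω ∈ Pᶜ) / cntR (fun ω : Ω => ω ∈ Pᶜ) :=
      unifP_div_unifP _ _
    rw [hsetP, hsetQ, hdivP, hdivQ]
    have hfibP : cntR (fun ω => f ω ∈ f '' Pᶜ ∧ ω ∈ P)
        = ∑ v ∈ Vals f P, cntR (fun ω => f ω = v ∧ ω ∈ P) := by
      rw [cntR_fiber f _ (Vals f P) (fun ω hω => by
        obtain ⟨x, hx, hfx⟩ := hω.1
        exact mem_Vals.2 ⟨x, hx, hfx⟩)]
      refine Finset.sum_congr rfl fun v hv => ?_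
      refine cntR_congr fun ω => ⟨fun hh => ⟨hh.1, hh.2.2⟩, fun hh => ⟨hh.1, ?_, hh.2⟩⟩
      obtain ⟨x, hx, hfx⟩ := mem_Vals.1 hv
      exact ⟨x, hx, by rw [hfx, hh.1]⟩
    have hfibQ : cntR (fun ω => f ω ∈ f '' P ∧ ω ∈ Pᶜ)
        = ∑ v ∈ Vals f P, cntR (fun ω => f ω = v ∧ f ω ∈ f '' P ∧ ω ∈ Pᶜ) :=
      cntR_fiber f _ (Vals f P) (fun ω hω => mem_Vals_of hω.2)
    rw [hfibP, hfibQ, Finset.sum_div, Finset.sum_div, ← Finset.sum_add_distrib,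
      Finset.mul_sum]
    refine Finset.sum_le_sum fun v _ => ?_
    by_cases hvP : v ∈ f '' P
    · have hrq : cntR (fun ω => f ω = v ∧ f ω ∈ f '' P ∧ ω ∈ Pᶜ)
          = cntR (fun ω => f ω = v ∧ ω ∈ Pᶜ) :=
        cntR_congr fun ω => ⟨fun hh => ⟨hh.1, hh.2.2⟩,
          fun hh => ⟨hh.1, by rw [hh.1]; exact hvP, hh.2⟩⟩
      rw [hrq]
      exact quarter_bound hcP hcQ (cntR_nonneg _) (cntR_nonneg _)
        (cntR_mono fun ω hh => hh.2) (cntR_mono fun ω hh => hh.2)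
    · have hp0 : cntR (fun ω => f ω = v ∧ ω ∈ P) = 0 := by
        refine le_antisymm ?_ (cntR_nonneg _)
        rw [← cntR_false (Ω := Ω)]
        exact cntR_mono fun ω hh => hvP ⟨ω, hh.2, hh.1⟩
      rw [hp0, mul_zero, zero_div]
      refine mul_nonneg (by norm_num) (add_nonneg ?_ ?_)
      · simp [hp0]
      · exact div_nonneg (cntR_nonneg _) hcQ.le
end

section
/- If 0 < ε < 1/2, g : ℝ → ℝ is given by g(t) = 2e^{|t|} for |t| < ε and g(t) = (1−2ε)e^{ε} for |t| ≥ ε, and ν is the probability measure with density (1/2)e^{−|t|} with respect to Lebesgue measure, then the function x(t) = ν(g^{-1}((t,∞))) has a jump discontinuity at t₀ = (1−2ε)e^{ε}: its left limit at t₀ is 1 and its right limit at t₀ is 1 − e^{−ε}. -/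
open MeasureTheory Set

lemma roc_aux_f_eq_neg {s : ℝ} (hs : s ≤ 0) :
    (1 / 2 : ℝ) * Real.exp (-|s|) = (1/2) * Real.exp s := by
  rw [abs_of_nonpos hs, neg_neg]

lemma roc_aux_f_eq_pos {s : ℝ} (hs : 0 ≤ s) :
    (1 / 2 : ℝ) * Real.exp (-|s|) = (1/2) * Real.exp (-s) := by
  rw [abs_of_nonneg hs]

lemma roc_aux_integrable : Integrable (fun t : ℝ => (1/2 : ℝ) * Real.exp (-|t|)) := by
  rw [← integrableOn_univ, ← Set.Iic_union_Ioi (a := (0:ℝ))]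
  apply MeasureTheory.IntegrableOn.union
  · have h : IntegrableOn (fun t : ℝ => (1/2 : ℝ) * Real.exp t) (Set.Iic 0) :=
      (integrableOn_exp_Iic 0).const_mul (1/2)
    exact h.congr_fun (fun s hs => (roc_aux_f_eq_neg hs).symm) measurableSet_Iic
  · have h : IntegrableOn (fun t : ℝ => (1/2 : ℝ) * Real.exp (-1 * t)) (Set.Ioi 0) :=
      (exp_neg_integrableOn_Ioi 0 one_pos).const_mul (1/2 : ℝ)
    exact h.congr_fun (fun s hs => by
      rw [roc_aux_f_eq_pos (le_of_lt hs)]; ring_nf) measurableSet_Ioi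

lemma roc_aux_integral_univ :
    (∫ t : ℝ, (1/2 : ℝ) * Real.exp (-|t|)) = 1 := by
  rw [← setIntegral_univ, ← Set.Iic_union_Ioi (a := (0:ℝ)),
    setIntegral_union (Set.Iic_disjoint_Ioi le_rfl) measurableSet_Ioi
      (roc_aux_integrable.integrableOn) (roc_aux_integrable.integrableOn)]
  have h1 : (∫ t in Set.Iic (0:ℝ), (1/2 : ℝ) * Real.exp (-|t|)) = 1/2 := by
    rw [setIntegral_congr_fun measurableSet_Iic (fun s hs => roc_aux_f_eq_neg hs),
      MeasureTheory.integral_const_mul, integral_exp_Iic_zero]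
    norm_num
  have h2 : (∫ t in Set.Ioi (0:ℝ), (1/2 : ℝ) * Real.exp (-|t|)) = 1/2 := by
    rw [setIntegral_congr_fun measurableSet_Ioi
        (fun s hs => roc_aux_f_eq_pos (le_of_lt hs)),
      MeasureTheory.integral_const_mul, integral_exp_neg_Ioi_zero]
    norm_num
  rw [h1, h2]; norm_num

lemma roc_aux_integral_Ioo {ε : ℝ} (hε : 0 < ε) :
    (∫ t in Set.Ioc (-ε) ε, (1/2 : ℝ) * Real.exp (-|t|)) = 1 - Real.exp (-ε) := by
  have hle : (-ε : ℝ) ≤ ε := by linarith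
  rw [← intervalIntegral.integral_of_le hle]
  have hsplit := intervalIntegral.integral_add_adjacent_intervals
    (a := -ε) (b := 0) (c := ε)
    (f := fun t : ℝ => (1/2 : ℝ) * Real.exp (-|t|)) (μ := volume)
    (roc_aux_integrable.intervalIntegrable) (roc_aux_integrable.intervalIntegrable)
  rw [← hsplit]
  have h1 : (∫ t in (-ε)..0, (1/2 : ℝ) * Real.exp (-|t|))
      = (1/2) * (1 - Real.exp (-ε)) := by
    rw [intervalIntegral.integral_congr (g := fun t : ℝ => (1/2 : ℝ) * Real.exp t)
      (fun s hs => by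
        rcases hs with ⟨hs1, hs2⟩
        have hmax : (-ε) ⊔ (0:ℝ) = 0 := max_eq_right (by linarith)
        rw [hmax] at hs2
        exact roc_aux_f_eq_neg hs2)]
    · rw [intervalIntegral.integral_const_mul, integral_exp]
      rw [Real.exp_zero]
  have h2 : (∫ t in (0:ℝ)..ε, (1/2 : ℝ) * Real.exp (-|t|))
      = (1/2) * (1 - Real.exp (-ε)) := by
    have hcomp := intervalIntegral.integral_comp_neg (a := (0:ℝ)) (b := ε)
      (fun t : ℝ => (1/2 : ℝ) * Real.exp (-|t|))
    simp only [abs_neg, neg_zero] at hcomp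
    rw [hcomp, h1]
  rw [h1, h2]; ring

open MeasureTheory Set

theorem roc_jump_discontinuity (ε : ℝ) (hε : ε ∈ Set.Ioo (0:ℝ) (1/2))
    (g : ℝ → ℝ)
    (hg : ∀ t, g t = if |t| < ε then 2 * Real.exp |t| else (1 - 2 * ε) * Real.exp ε)
    (ν : Measure ℝ)
    (hν : ν = volume.withDensity fun t => ENNReal.ofReal ((1 / 2) * Real.exp (-|t|)))
    (x : ℝ → ℝ) (hx : ∀ t, x t = (ν {s | g s > t}).toReal) :
    Filter.Tendsto x (nhdsWithin ((1 - 2 * ε) * Real.exp ε) (Set.Iio ((1 - 2 * ε) * Real.exp ε)))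
      (nhds 1) ∧
    Filter.Tendsto x (nhdsWithin ((1 - 2 * ε) * Real.exp ε) (Set.Ioi ((1 - 2 * ε) * Real.exp ε)))
      (nhds (1 - Real.exp (-ε))) := by
  obtain ⟨hε0, hε2⟩ := hε
  set t₀ : ℝ := (1 - 2 * ε) * Real.exp ε with ht₀
  -- basic bounds
  have hexp2 : Real.exp ε < 2 := by
    have h1 : Real.exp ε < Real.exp (1/2) := Real.exp_lt_exp.2 hε2
    have h2 : Real.exp (1/2) * Real.exp (1/2) = Real.exp 1 := by
      rw [← Real.exp_add]; norm_num
    have h3 : Real.exp 1 < 4 := lt_trans Real.exp_one_lt_d9 (by norm_num)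
    nlinarith [Real.exp_pos (1/2 : ℝ)]
  have ht₀2 : t₀ < 2 := by
    have h1 : (1 - 2 * ε) < 1 := by linarith
    nlinarith [Real.exp_pos ε]
  have ht₀pos : 0 < t₀ := by
    apply mul_pos (by linarith) (Real.exp_pos ε)
  -- measure computations
  have hν_univ : ν Set.univ = 1 := by
    rw [hν, MeasureTheory.withDensity_apply _ MeasurableSet.univ,
      Measure.restrict_univ,
      ← MeasureTheory.ofReal_integral_eq_lintegral_ofReal roc_aux_integrable
        (Filter.Eventually.of_forall fun t => by positivity),
      roc_aux_integral_univ, ENNReal.ofReal_one]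
  have hν_Ioo : ν (Set.Ioo (-ε) ε) = ENNReal.ofReal (1 - Real.exp (-ε)) := by
    rw [hν, MeasureTheory.withDensity_apply _ measurableSet_Ioo]
    rw [MeasureTheory.setLIntegral_congr (MeasureTheory.Ioo_ae_eq_Ioc)]
    rw [← MeasureTheory.ofReal_integral_eq_lintegral_ofReal
        (roc_aux_integrable.integrableOn)
        (Filter.Eventually.of_forall fun t => by positivity),
      roc_aux_integral_Ioo hε0]
  -- value of x left of t₀
  have hxleft : ∀ t ∈ Set.Iio t₀, x t = 1 := by
    intro t ht
    have hset : {s : ℝ | g s > t} = Set.univ := by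
      ext s
      simp only [Set.mem_setOf_eq, Set.mem_univ, iff_true]
      rw [hg s]
      split_ifs with h
      · have : (2:ℝ) ≤ 2 * Real.exp |s| := by
          nlinarith [Real.one_le_exp (abs_nonneg s)]
        calc t < t₀ := ht
          _ < 2 := ht₀2
          _ ≤ 2 * Real.exp |s| := this
      · exact ht
    rw [hx t, hset, hν_univ, ENNReal.toReal_one]
  -- value of x in (t₀, 2)
  have hxright : ∀ t ∈ Set.Ioo t₀ 2, x t = 1 - Real.exp (-ε) := by
    intro t ht
    have hset : {s : ℝ | g s > t} = Set.Ioo (-ε) ε := by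
      ext s
      simp only [Set.mem_setOf_eq, Set.mem_Ioo, ← abs_lt]
      rw [hg s]
      split_ifs with h
      · simp only [h, iff_true]
        have : (2:ℝ) ≤ 2 * Real.exp |s| := by
          nlinarith [Real.one_le_exp (abs_nonneg s)]
        exact lt_of_lt_of_le ht.2 this
      · simp only [h, iff_false, not_lt]
        exact le_of_lt ht.1
    rw [hx t, hset, hν_Ioo, ENNReal.toReal_ofReal]
    have : Real.exp (-ε) < 1 := Real.exp_lt_one_iff.2 (by linarith)
    linarith
  constructor
  · apply Filter.Tendsto.congr' _ tendsto_const_nhds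
    filter_upwards [self_mem_nhdsWithin] with t ht
    exact (hxleft t ht).symm
  · apply Filter.Tendsto.congr' _ tendsto_const_nhds
    filter_upwards [Ioo_mem_nhdsGT_of_mem ⟨le_refl t₀, ht₀2⟩] with t ht
    exact (hxright t ht).symm
end

section
/- Suppose ν_P and ν_N are probability measures on ℝⁿ absolutely continuous with respect to Lebesgue measure with densities f_P and f_N, f_N > 0 everywhere, and let g = f_P/f_N. If x(t) = ν_N(g^{-1}((t,∞))) and y(t) = ν_P(g^{-1}((t,∞))) are absolutely continuous and strictly decreasing on (0,∞) with x, y → 1 as t → 0 and x, y → 0 as t → ∞, then ∫₀^∞ y(β)(−x′(β)) dβ = (ν_N ⊗ ν_P)({(s,r) : g(s) < g(r)}). -/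
open MeasureTheory Set

theorem continuous_auc_eq_sep_prob (n : ℕ) (fP fN : (Fin n → ℝ) → ℝ)
    (hfPm : Measurable fP) (hfNm : Measurable fN)
    (hfP0 : ∀ z, 0 ≤ fP z) (hfN0 : ∀ z, 0 < fN z)
    (νP νN : Measure (Fin n → ℝ))
    (hνP : νP = volume.withDensity fun z => ENNReal.ofReal (fP z))
    (hνN : νN = volume.withDensity fun z => ENNReal.ofReal (fN z))
    (hνPprob : IsProbabilityMeasure νP) (hνNprob : IsProbabilityMeasure νN)
    (g : (Fin n → ℝ) → ℝ) (hg : g = fun z => fP z / fN z)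
    (x y : ℝ → ℝ)
    (hx : ∀ t, x t = (νN {z | g z > t}).toReal)
    (hy : ∀ t, y t = (νP {z | g z > t}).toReal)
    (hxanti : StrictAntiOn x (Set.Ioi 0)) (hyanti : StrictAntiOn y (Set.Ioi 0))
    (hxAC : ∀ a b : ℝ, 0 < a → 0 < b → x b - x a = ∫ t in a..b, deriv x t)
    (hyAC : ∀ a b : ℝ, 0 < a → 0 < b → y b - y a = ∫ t in a..b, deriv y t)
    (hx0 : Filter.Tendsto x (nhdsWithin 0 (Set.Ioi 0)) (nhds 1))
    (hy0 : Filter.Tendsto y (nhdsWithin 0 (Set.Ioi 0)) (nhds 1))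
    (hxinf : Filter.Tendsto x Filter.atTop (nhds 0))
    (hyinf : Filter.Tendsto y Filter.atTop (nhds 0)) :
    ∫ β in Set.Ioi (0:ℝ), y β * (-(deriv x β))
      = ((νN.prod νP) {p : (Fin n → ℝ) × (Fin n → ℝ) | g p.1 < g p.2}).toReal := by
  have hgm : Measurable g := by rw [hg]; exact hfPm.div hfNm
  set h : ℝ → ℝ := fun β => -deriv x β with hh
  have hhm : Measurable h := (measurable_deriv x).neg
  have hynn : ∀ t, 0 ≤ y t := fun t => (hy t) ▸ ENNReal.toReal_nonneg
  have hymeas : Measurable y := by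
    have hanti : Antitone y := fun s t hst => by
      rw [hy s, hy t]
      exact ENNReal.toReal_mono (measure_ne_top _ _)
        (measure_mono fun z hz => lt_of_le_of_lt hst hz)
    exact hanti.measurable
  have hset : ∀ t : ℝ, MeasurableSet {z | g z > t} := fun t =>
    measurableSet_lt measurable_const hgm
  -- h is nonnegative on (0, ∞)
  have hhnn : ∀ β ∈ Ioi (0:ℝ), 0 ≤ h β := by
    intro β hβ
    simp only [hh, neg_nonneg, le_refl]
    show deriv x β ≤ 0
    by_cases hd : DifferentiableAt ℝ x β
    · have hder := hd.hasDerivAt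
      have htend : Filter.Tendsto (slope x β) (nhdsWithin β (Ioi β)) (nhds (deriv x β)) :=
        (hasDerivAt_iff_tendsto_slope.mp hder).mono_left
          (nhdsWithin_mono _ (fun t ht => ne_of_gt ht))
      refine le_of_tendsto htend ?_
      filter_upwards [self_mem_nhdsWithin] with t ht
      have h1 : x t < x β := hxanti hβ (mem_Ioi.mpr (lt_trans (mem_Ioi.mp hβ) (mem_Ioi.mp ht))) ht
      rw [slope_def_field]
      exact div_nonpos_of_nonpos_of_nonneg (by linarith) (by simp only [sub_nonneg]; exact (le_of_lt ht))
    · simp [deriv_zero_of_not_differentiableAt hd]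
  -- key lemma A
  have keyA : ∀ a b : ℝ, 0 < a → a < b →
      ∫⁻ β in Ioc a b, ENNReal.ofReal (h β) = νN {z | g z > a} - νN {z | g z > b} := by
    intro a b ha hab
    have hb : (0:ℝ) < b := ha.trans hab
    have hInt : IntegrableOn (deriv x) (Ioc a b) volume := by
      by_contra hni
      have h0 : x b - x a = 0 := by
        rw [hxAC a b ha hb, intervalIntegral.integral_of_le hab.le, integral_undef hni]
      have h1 : x b < x a := hxanti ha hb hab
      linarith
    have hInt' : IntegrableOn h (Ioc a b) volume := hInt.neg
    have h1 : ∫ β in Ioc a b, h β = x a - x b := by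
      have h2 := hxAC a b ha hb
      rw [intervalIntegral.integral_of_le hab.le] at h2
      simp only [hh]
      rw [integral_neg]
      linarith
    have hnn : 0 ≤ᵐ[volume.restrict (Ioc a b)] h := by
      rw [Filter.EventuallyLE, ae_restrict_iff' measurableSet_Ioc]
      exact Filter.Eventually.of_forall fun β hβ => hhnn β (lt_trans ha hβ.1)
    have h2 : ∫⁻ β in Ioc a b, ENNReal.ofReal (h β) = ENNReal.ofReal (x a - x b) := by
      rw [← ofReal_integral_eq_lintegral_ofReal hInt' hnn, h1]
    have hsub : {z | g z > b} ⊆ {z | g z > a} := fun z hz => lt_trans hab hz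
    rw [h2, hx, hx, ← ENNReal.toReal_sub_of_le (measure_mono hsub) (measure_ne_top _ _),
      ENNReal.ofReal_toReal]
    exact ne_top_of_le_ne_top (measure_ne_top _ _) tsub_le_self
  -- ν {g ≤ 0} = 0 for both measures
  have key0 : ∀ (ν : Measure (Fin n → ℝ)) (w : ℝ → ℝ), IsProbabilityMeasure ν →
      (∀ t, w t = (ν {z | g z > t}).toReal) →
      Filter.Tendsto w (nhdsWithin 0 (Set.Ioi 0)) (nhds 1) → ν {z | g z ≤ 0} = 0 := by
    intro ν w hprob hw hw0
    haveI := hprob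
    have hmono : Monotone (fun k : ℕ => {z | g z > 1/(k+1:ℝ)}) := by
      intro i j hij z hz
      simp only [mem_setOf_eq, gt_iff_lt] at hz ⊢
      refine lt_of_le_of_lt ?_ hz
      apply one_div_le_one_div_of_le
      · positivity
      · have : (i:ℝ) ≤ (j:ℝ) := Nat.cast_le.mpr hij
        linarith
    have hU : ⋃ k : ℕ, {z | g z > 1/(k+1:ℝ)} = {z | g z > 0} := by
      ext z
      simp only [mem_iUnion, mem_setOf_eq]
      constructor
      · rintro ⟨k, hk⟩; exact lt_trans (by positivity) hk
      · intro hz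
        obtain ⟨k, hk⟩ := exists_nat_one_div_lt hz
        exact ⟨k, hk⟩
    have h1 : Filter.Tendsto (fun k : ℕ => ν {z | g z > 1/(k+1:ℝ)}) Filter.atTop
        (nhds (ν {z | g z > 0})) := by
      have h0 := tendsto_measure_iUnion_atTop (ι := ℕ) (μ := ν) hmono
      rwa [hU] at h0
    have h2 : Filter.Tendsto (fun k : ℕ => w (1/(k+1:ℝ))) Filter.atTop (nhds 1) := by
      apply hw0.comp
      apply tendsto_nhdsWithin_of_tendsto_nhds_of_eventually_within
      · exact tendsto_one_div_add_atTop_nhds_zero_nat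
      · exact Filter.Eventually.of_forall fun k => mem_Ioi.mpr (by positivity)
    have h3 : Filter.Tendsto (fun k : ℕ => w (1/(k+1:ℝ))) Filter.atTop
        (nhds (ν {z | g z > 0}).toReal) := by
      have := (ENNReal.tendsto_toReal (measure_ne_top ν {z | g z > 0})).comp h1
      refine this.congr fun k => ?_
      simp [hw]
    have h4 : (ν {z | g z > 0}).toReal = 1 := tendsto_nhds_unique h3 h2
    have h5 : ν {z | g z > 0} = 1 := by
      rwa [ENNReal.toReal_eq_one_iff] at h4
    have h6 : {z | g z ≤ 0} = {z | g z > 0}ᶜ := by ext z; simp [not_lt]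
    rw [h6, prob_compl_eq_zero_iff (hset 0)]
    exact h5
  have hgN0 : νN {z | g z ≤ 0} = 0 := key0 νN x hνNprob hx hx0
  have hgP0 : νP {z | g z ≤ 0} = 0 := key0 νP y hνPprob hy hy0
  -- key lemma B
  have keyB : ∀ c : ℝ, 0 < c →
      ∫⁻ β in Ioo 0 c, ENNReal.ofReal (h β) = νN {z | g z < c} := by
    intro c hc
    set A : ℕ → Set ℝ := fun k => Ioc (c/(k+3:ℝ)) (c - c/(k+3:ℝ)) with hA
    have hak : ∀ k : ℕ, 0 < c/(k+3:ℝ) := fun k => by positivity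
    have habk : ∀ k : ℕ, c/(k+3:ℝ) < c - c/(k+3:ℝ) := by
      intro k
      have h1 : c/(k+3:ℝ) ≤ c/3 := by
        apply div_le_div_of_nonneg_left hc.le (by norm_num)
        have : (0:ℝ) ≤ (k:ℝ) := Nat.cast_nonneg k
        linarith
      linarith
    have hmonoA : Monotone A := by
      intro i j hij
      apply Ioc_subset_Ioc
      · apply div_le_div_of_nonneg_left hc.le (by positivity)
        have : (i:ℝ) ≤ (j:ℝ) := Nat.cast_le.mpr hij
        linarith
      · have h1 : c/(j+3:ℝ) ≤ c/(i+3:ℝ) := by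
          apply div_le_div_of_nonneg_left hc.le (by positivity)
          have : (i:ℝ) ≤ (j:ℝ) := Nat.cast_le.mpr hij
          linarith
        linarith
    have hUA : ⋃ k : ℕ, A k = Ioo 0 c := by
      ext t
      simp only [hA, mem_iUnion, mem_Ioc, mem_Ioo]
      constructor
      · rintro ⟨k, hk1, hk2⟩
        exact ⟨lt_trans (hak k) hk1, lt_of_le_of_lt hk2 (by linarith [hak k])⟩
      · rintro ⟨ht1, ht2⟩
        have hε : (0:ℝ) < min t (c - t) := lt_min ht1 (by linarith)
        obtain ⟨k, hk⟩ := exists_nat_gt (c / min t (c - t))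
        have hk' : c < (k:ℝ) * min t (c - t) := (div_lt_iff₀ hε).mp hk
        have h2 : c/((k:ℝ)+3) < min t (c - t) := by
          rw [div_lt_iff₀ (by positivity)]
          nlinarith [hε.le]
        refine ⟨k, ?_, ?_⟩
        · exact lt_of_lt_of_le h2 (min_le_left _ _)
        · have := lt_of_lt_of_le h2 (min_le_right _ _)
          linarith
    set μ := volume.withDensity fun β => ENNReal.ofReal (h β) with hμ
    have hL : Filter.Tendsto (fun k => μ (A k)) Filter.atTop (nhds (μ (Ioo 0 c))) := by
      rw [← hUA]; exact tendsto_measure_iUnion_atTop hmonoA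
    have hR : Filter.Tendsto (fun k => νN (g ⁻¹' (A k))) Filter.atTop
        (nhds (νN (g ⁻¹' (Ioo 0 c)))) := by
      rw [← hUA, preimage_iUnion]
      exact tendsto_measure_iUnion_atTop fun i j hij => preimage_mono (hmonoA hij)
    have heq : ∀ k, μ (A k) = νN (g ⁻¹' (A k)) := by
      intro k
      rw [hμ, withDensity_apply _ measurableSet_Ioc, keyA _ _ (hak k) (habk k)]
      have hpre : g ⁻¹' (A k)
          = {z | g z > c/(k+3:ℝ)} \ {z | g z > c - c/(k+3:ℝ)} := by
        ext z
        simp only [hA, mem_preimage, mem_Ioc, mem_diff, mem_setOf_eq, not_lt, gt_iff_lt]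
      rw [hpre]
      exact (measure_diff (fun z hz => lt_trans (habk k) hz)
        (hset _).nullMeasurableSet (measure_ne_top _ _)).symm
    have hμIoo : μ (Ioo 0 c) = νN (g ⁻¹' (Ioo 0 c)) :=
      tendsto_nhds_unique (hL.congr heq) hR
    have hgIoo : νN (g ⁻¹' (Ioo 0 c)) = νN {z | g z < c} := by
      apply le_antisymm
      · exact measure_mono fun z hz => hz.2
      · calc νN {z | g z < c} ≤ νN (g ⁻¹' (Ioo 0 c) ∪ {z | g z ≤ 0}) := by
              apply measure_mono
              intro z hz
              by_cases h0 : 0 < g z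
              · exact Or.inl ⟨h0, hz⟩
              · exact Or.inr (not_lt.mp h0)
          _ ≤ νN (g ⁻¹' (Ioo 0 c)) + νN {z | g z ≤ 0} := measure_union_le _ _
          _ = νN (g ⁻¹' (Ioo 0 c)) := by rw [hgN0, add_zero]
    rw [← hgIoo, ← hμIoo, hμ, withDensity_apply _ measurableSet_Ioo]
  -- a.e. positivity of g under νP
  have haeP : ∀ᵐ r ∂νP, 0 < g r := by
    rw [ae_iff]
    convert hgP0 using 2
    ext r; simp [not_lt]
  have hprodset : MeasurableSet {p : (Fin n → ℝ) × (Fin n → ℝ) | g p.1 < g p.2} :=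
    measurableSet_lt (hgm.comp measurable_fst) (hgm.comp measurable_snd)
  have hae_nn : 0 ≤ᵐ[volume.restrict (Ioi (0:ℝ))] fun β => y β * (-(deriv x β)) := by
    rw [Filter.EventuallyLE, ae_restrict_iff' measurableSet_Ioi]
    exact Filter.Eventually.of_forall fun β hβ => mul_nonneg (hynn β) (hhnn β hβ)
  rw [integral_eq_lintegral_of_nonneg_ae hae_nn ((hymeas.mul hhm).aestronglyMeasurable)]
  congr 1
  set S : Set (ℝ × (Fin n → ℝ)) := {p | p.1 < g p.2} with hS
  have hSm : MeasurableSet S := measurableSet_lt measurable_fst (hgm.comp measurable_snd)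
  set F : ℝ → (Fin n → ℝ) → ENNReal :=
    fun β r => S.indicator (fun _ => 1) (β, r) * ENNReal.ofReal (h β) with hF
  have hstep1 : ∫⁻ β in Ioi (0:ℝ), ENNReal.ofReal (y β * (-(deriv x β)))
      = ∫⁻ β in Ioi (0:ℝ), ∫⁻ r, F β r ∂νP := by
    refine lintegral_congr fun β => ?_
    have e1 : ∫⁻ r, F β r ∂νP = νP {r | g r > β} * ENNReal.ofReal (h β) := by
      rw [hF]
      rw [lintegral_mul_const' _ _ ENNReal.ofReal_ne_top]
      congr 1
      have e2 : (fun r => S.indicator (fun _ => (1:ENNReal)) (β, r))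
          = fun r => {r | g r > β}.indicator (fun _ => (1:ENNReal)) r := by
        funext r
        simp only [indicator_apply, hS, mem_setOf_eq]
      rw [e2]
      exact lintegral_indicator_one (hset β)
    rw [e1, ENNReal.ofReal_mul (hynn β), hy β, ENNReal.ofReal_toReal (measure_ne_top _ _)]
  rw [hstep1]
  have hFm : Measurable (Function.uncurry F) := by
    apply Measurable.mul
    · exact measurable_const.indicator hSm
    · exact ENNReal.measurable_ofReal.comp (hhm.comp measurable_fst)
  rw [lintegral_lintegral_swap hFm.aemeasurable]
  have hstep2 : ∀ᵐ r ∂νP, ∫⁻ β in Ioi (0:ℝ), F β r = νN {s | g s < g r} := by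
    filter_upwards [haeP] with r hr
    have e3 : (fun β => F β r) = (Iio (g r)).indicator fun β => ENNReal.ofReal (h β) := by
      funext β
      by_cases hβ : β < g r
      · simp [hF, hS, indicator_of_mem, hβ, mem_Iio]
      · simp [hF, hS, indicator_of_notMem, hβ, mem_Iio]
    rw [e3, lintegral_indicator measurableSet_Iio,
      Measure.restrict_restrict measurableSet_Iio, Iio_inter_Ioi, keyB _ hr]
  rw [lintegral_congr_ae hstep2, Measure.prod_apply_symm hprodset]
  rfl
end
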